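/- arXiv:2503.15440 — 6 statements merged into one kernel-verified Lean document; each statement's English description precedes it below -/
import Mathlib

section
/- Let λ and μ be partitions of n with λ ⊴ μ in the dominance order. Then n(λ') ≤ n(μ'), with equality if and only if λ = μ. Here n(ν) := Σ_{i≥1} (i−1)ν_i for a partition ν, and ν' denotes the conjugate partition. -/
/-!
Write `T_m(ν) = Σ_i (ν_i - m)₊`. Then `T_m(ν) - T_{m+1}(ν) = ν'_{m+1}`, so
`n(ν') = Σ_j j ν'_{j+1} = Σ_{m ≥ 1} T_m(ν)`. For antitone `λ`, `T_m(λ)` is the sum of the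
first `λ'_m` parts of `λ` minus `m λ'_m`, so dominance gives `T_m(λ) ≤ T_m(μ)` termwise,
whence the inequality. If `n(λ') = n(μ')`, every `T_m` agrees (`T_0 = n` for both), hence
`λ' = μ'` and `λ = μ`.
-/

open Finset

def truncSum (n : ℕ) (ν : ℕ → ℕ) (m : ℕ) : ℕ := ∑ i ∈ range n, (ν i - m)

lemma truncSum_eq_truncSum_succ_add_card (n : ℕ) (ν : ℕ → ℕ) (m : ℕ) :
    truncSum n ν m = truncSum n ν (m + 1) + #{i ∈ range n | m + 1 ≤ ν i} := by
  rw [truncSum, truncSum, card_filter, ← sum_add_distrib]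
  refine sum_congr rfl fun i _ => ?_
  split <;> omega

lemma truncSum_eq_zero {n : ℕ} {ν : ℕ → ℕ} {m : ℕ} (h : ∀ i < n, ν i ≤ m) :
    truncSum n ν m = 0 :=
  sum_eq_zero fun i hi => Nat.sub_eq_zero_of_le (h i (mem_range.mp hi))

lemma Antitone.lt_card_filter_le_iff {ν : ℕ → ℕ} (hν : Antitone ν) {n i c : ℕ}
    (hi : i < n) : i < #{k ∈ range n | c ≤ ν k} ↔ c ≤ ν i := by
  constructor
  · intro h
    by_contra! hc
    have hsub : {k ∈ range n | c ≤ ν k} ⊆ range i := fun k hk => by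
      simp only [mem_filter, mem_range] at hk ⊢
      by_contra! hik
      exact (hk.2.trans (hν hik)).not_gt hc
    exact (h.trans_le ((card_le_card hsub).trans (card_range i).le)).false
  · intro h
    have hsub : range (i + 1) ⊆ {k ∈ range n | c ≤ ν k} := fun k hk => by
      simp only [mem_filter, mem_range] at hk ⊢
      exact ⟨by omega, h.trans (hν (by omega))⟩
    simpa using card_le_card hsub

/-- Both sides are `Σ_{j<a} j`, summed in opposite orders. -/
lemma sum_range_ite_succ_le_eq_sum_range_tsub {n a : ℕ} (ha : a ≤ n) :
    (∑ j ∈ range n, if j + 1 ≤ a then j else 0) = ∑ k ∈ range n, (a - (k + 1)) := by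
  have hleft : (∑ j ∈ range n, if j + 1 ≤ a then j else 0) = ∑ j ∈ range a, j := by
    rw [← sum_filter]
    congr 1
    ext j
    simp only [mem_filter, mem_range]
    omega
  have hright : ∑ k ∈ range n, (a - (k + 1)) = ∑ k ∈ range a, (a - (k + 1)) := by
    refine (sum_subset (range_subset_range.mpr ha) fun k _ hk => ?_).symm
    simp only [mem_range] at hk
    omega
  rw [hleft, hright, ← sum_range_reflect (fun j => j) a]
  exact sum_congr rfl fun k hk => by simp only [mem_range] at hk; omega

lemma sum_mul_card_filter_eq_sum_truncSum {n : ℕ} {ν : ℕ → ℕ}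
    (hν : ∀ i < n, ν i ≤ n) :
    ∑ j ∈ range n, j * #{i ∈ range n | j + 1 ≤ ν i} =
      ∑ k ∈ range n, truncSum n ν (k + 1) := by
  calc ∑ j ∈ range n, j * #{i ∈ range n | j + 1 ≤ ν i}
      = ∑ j ∈ range n, ∑ i ∈ range n, if j + 1 ≤ ν i then j else 0 := by
        refine sum_congr rfl fun j _ => ?_
        rw [← sum_filter, sum_const, smul_eq_mul, mul_comm]
    _ = ∑ i ∈ range n, ∑ k ∈ range n, (ν i - (k + 1)) := by
        rw [sum_comm]
        exact sum_congr rfl fun i hi =>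
          sum_range_ite_succ_le_eq_sum_range_tsub (hν i (mem_range.mp hi))
    _ = ∑ k ∈ range n, truncSum n ν (k + 1) := sum_comm

lemma truncSum_le_of_dominates {n : ℕ} {lam mu : ℕ → ℕ} (hlam : Antitone lam)
    (hdom : ∀ k, ∑ i ∈ range k, lam i ≤ ∑ i ∈ range k, mu i) (m : ℕ) :
    truncSum n lam (m + 1) ≤ truncSum n mu (m + 1) := by
  set s := #{i ∈ range n | m + 1 ≤ lam i}
  have hsn : s ≤ n := (card_filter_le _ _).trans (card_range n).le
  have hlam_large : ∀ i ∈ range s, m + 1 ≤ lam i := fun i hi =>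
    (hlam.lt_card_filter_le_iff ((mem_range.mp hi).trans_le hsn)).mp (mem_range.mp hi)
  have hlam_trunc : truncSum n lam (m + 1) = ∑ i ∈ range s, (lam i - (m + 1)) := by
    refine (sum_subset (range_subset_range.mpr hsn) fun i hi his => ?_).symm
    simp only [mem_range] at hi his
    have := mt (hlam.lt_card_filter_le_iff hi).mpr his
    omega
  have hconst : s * (m + 1) = ∑ _i ∈ range s, (m + 1) := by simp
  have hlam_sum :
      ∑ i ∈ range s, lam i = ∑ i ∈ range s, (lam i - (m + 1)) + s * (m + 1) := by
    rw [hconst, ← sum_add_distrib]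
    exact sum_congr rfl fun i hi => (Nat.sub_add_cancel (hlam_large i hi)).symm
  have hmu_sum : ∑ i ∈ range s, mu i ≤ ∑ i ∈ range s, (mu i - (m + 1)) + s * (m + 1) := by
    rw [hconst, ← sum_add_distrib]
    exact sum_le_sum fun i _ => le_tsub_add
  have hmu_trunc : ∑ i ∈ range s, (mu i - (m + 1)) ≤ truncSum n mu (m + 1) :=
    sum_le_sum_of_subset (range_subset_range.mpr hsn)
  have := hdom s
  omega

lemma eq_of_card_filter_eq {n : ℕ} {lam mu : ℕ → ℕ}
    (hlam : Antitone lam) (hmu : Antitone mu)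
    (hl0 : ∀ i, n ≤ i → lam i = 0) (hm0 : ∀ i, n ≤ i → mu i = 0)
    (hconj : ∀ j, #{i ∈ range n | j + 1 ≤ lam i} = #{i ∈ range n | j + 1 ≤ mu i}) :
    lam = mu := by
  funext i
  by_cases hi : i < n
  · have hiff : ∀ j, j + 1 ≤ lam i ↔ j + 1 ≤ mu i := fun j => by
      rw [← hlam.lt_card_filter_le_iff hi, ← hmu.lt_card_filter_le_iff hi, hconj]
    have := hiff (lam i)
    have := hiff (mu i)
    omega
  · rw [hl0 i (by omega), hm0 i (by omega)]

/-- For partitions `λ ⊴ μ` of `n` (in dominance order), `n(λ') ≤ n(μ')`, with equality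
iff `λ = μ`. Here partitions of `n` are encoded as antitone functions `ℕ → ℕ` supported
on `{0, ..., n-1}` with total sum `n` (parts `λ_{i+1} = lam i`), the conjugate partition
is `λ'_{j+1} = #{i < n : lam i ≥ j+1}`, and `n(ν) = Σ_{i≥1} (i-1) ν_i`. -/
theorem stmt_3 (n : ℕ) (lam mu : ℕ → ℕ)
    (hlanti : ∀ i j, i ≤ j → lam j ≤ lam i) (hl0 : ∀ i, n ≤ i → lam i = 0)
    (hlsum : ∑ i ∈ Finset.range n, lam i = n)
    (hmanti : ∀ i j, i ≤ j → mu j ≤ mu i) (hm0 : ∀ i, n ≤ i → mu i = 0)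
    (hmsum : ∑ i ∈ Finset.range n, mu i = n)
    (hdom : ∀ k, ∑ i ∈ Finset.range k, lam i ≤ ∑ i ∈ Finset.range k, mu i) :
    (∑ j ∈ Finset.range n, j * ((Finset.range n).filter fun i => j + 1 ≤ lam i).card ≤
      ∑ j ∈ Finset.range n, j * ((Finset.range n).filter fun i => j + 1 ≤ mu i).card) ∧
    ((∑ j ∈ Finset.range n, j * ((Finset.range n).filter fun i => j + 1 ≤ lam i).card =
      ∑ j ∈ Finset.range n, j * ((Finset.range n).filter fun i => j + 1 ≤ mu i).card) ↔
      lam = mu) := by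
  have hlam : Antitone lam := fun i j => hlanti i j
  have hmu : Antitone mu := fun i j => hmanti i j
  have hlam_le : ∀ i < n, lam i ≤ n := fun i hi =>
    hlsum ▸ single_le_sum (fun _ _ => Nat.zero_le _) (mem_range.mpr hi)
  have hmu_le : ∀ i < n, mu i ≤ n := fun i hi =>
    hmsum ▸ single_le_sum (fun _ _ => Nat.zero_le _) (mem_range.mpr hi)
  have htrunc_le := truncSum_le_of_dominates (n := n) hlam hdom
  rw [sum_mul_card_filter_eq_sum_truncSum hlam_le, sum_mul_card_filter_eq_sum_truncSum hmu_le]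
  refine ⟨sum_le_sum fun m _ => htrunc_le m, fun heq => ?_, fun h => h ▸ rfl⟩
  have htrunc : ∀ m, truncSum n lam m = truncSum n mu m
    | 0 => by simp only [truncSum, Nat.sub_zero, hlsum, hmsum]
    | m + 1 => by
      by_cases hm : m < n
      · exact (sum_eq_sum_iff_of_le fun k _ => htrunc_le k).mp heq m (mem_range.mpr hm)
      · rw [truncSum_eq_zero fun i hi => (hlam_le i hi).trans (by omega),
          truncSum_eq_zero fun i hi => (hmu_le i hi).trans (by omega)]
  refine eq_of_card_filter_eq hlam hmu hl0 hm0 fun j => ?_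
  have := truncSum_eq_truncSum_succ_add_card n lam j
  have := truncSum_eq_truncSum_succ_add_card n mu j
  have := htrunc j
  have := htrunc (j + 1)
  omega
end

section
/- Define B_0 = 1 and for n ≥ 1, B_n = Σ_{j=0}^{⌊n/2⌋} (−1)^j q^{binom(j,2)} GaussBinom(n−j, j, q) · [n]_q/[n−j]_q, and A_n = Σ_{j=0}^{⌊n/2⌋} (−1)^j q^{binom(j,2)} GaussBinom(n−j, j, q) with A_m = 0 for m < 0. Then for all n ≥ 1, B_n = A_n − q^{n−1} A_{n−2}. -/
/-- The q-integer `[n]_q = (q^n - 1)/(q - 1)`. -/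
noncomputable def qint (q : ℝ) (n : ℕ) : ℝ := (q ^ n - 1) / (q - 1)

/-- The q-factorial `[n]_q!`. -/
noncomputable def qfact (q : ℝ) (n : ℕ) : ℝ := ∏ i ∈ Finset.range n, qint q (i + 1)

/-- The Gaussian binomial coefficient `[l]_q! / ([r]_q! [l-r]_q!)`. -/
noncomputable def qbinom (q : ℝ) (l r : ℕ) : ℝ := qfact q l / (qfact q r * qfact q (l - r))

/-- `A_n = Σ_{j=0}^{⌊n/2⌋} (-1)^j q^{binom(j,2)} GaussBinom(n-j, j, q)`, extended by
`A_m = 0` for `m < 0`. -/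
noncomputable def Aseq (q : ℝ) (m : ℤ) : ℝ :=
  if m < 0 then 0 else
    ∑ j ∈ Finset.range (m.toNat / 2 + 1),
      (-1 : ℝ) ^ j * q ^ (j.choose 2) * qbinom q (m.toNat - j) j

/-- `B_0 = 1` and, for `n ≥ 1`,
`B_n = Σ_{j=0}^{⌊n/2⌋} (-1)^j q^{binom(j,2)} GaussBinom(n-j, j, q) ⋅ [n]_q/[n-j]_q`. -/
noncomputable def Bseq (q : ℝ) (n : ℕ) : ℝ :=
  if n = 0 then 1 else
    ∑ j ∈ Finset.range (n / 2 + 1),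
      (-1 : ℝ) ^ j * q ^ (j.choose 2) * qbinom q (n - j) j * (qint q n / qint q (n - j))

/-!
Since `[n]_q = [n-j]_q + q^(n-j) [j]_q`, the `j`-th summand of `B_n` is the `j`-th summand of
`A_n` plus the correction `q^(n-j) [j]_q / [n-j]_q` times it. The correction vanishes for `j = 0`,
and for `j = i + 1` the identity `GaussBinom(m+1, i+1) [i+1]_q / [m+1]_q = GaussBinom(m, i)` turns
it into `-q^(n-1)` times the `i`-th summand of `A_(n-2)`.
-/

section QAnalogues

variable {q : ℝ}

theorem qint_eq_sum_pow (hq : q ≠ 1) (n : ℕ) : qint q n = ∑ i ∈ Finset.range n, q ^ i :=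
  (geom_sum_eq hq n).symm

theorem qint_zero (q : ℝ) : qint q 0 = 0 := by simp [qint]

theorem qint_add (hq : q ≠ 1) (a b : ℕ) : qint q (a + b) = qint q a + q ^ a * qint q b := by
  have : q - 1 ≠ 0 := sub_ne_zero.mpr hq
  simp only [qint, pow_add]
  field_simp
  ring

theorem qint_pos (hq₀ : 0 < q) (hq : q ≠ 1) {n : ℕ} (hn : n ≠ 0) : 0 < qint q n := by
  rw [qint_eq_sum_pow hq]
  exact Finset.sum_pos (fun i _ => pow_pos hq₀ i) (Finset.nonempty_range_iff.mpr hn)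

theorem qfact_pos (hq₀ : 0 < q) (hq : q ≠ 1) (n : ℕ) : 0 < qfact q n :=
  Finset.prod_pos fun i _ => qint_pos hq₀ hq i.succ_ne_zero

theorem qfact_succ (q : ℝ) (n : ℕ) : qfact q (n + 1) = qfact q n * qint q (n + 1) :=
  Finset.prod_range_succ _ _

theorem qbinom_succ_mul_qint_div (hq₀ : 0 < q) (hq : q ≠ 1) (m a : ℕ) :
    qbinom q (m + 1) (a + 1) * (qint q (a + 1) / qint q (m + 1)) = qbinom q m a := by
  have := qint_pos hq₀ hq a.succ_ne_zero
  have := qint_pos hq₀ hq m.succ_ne_zero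
  have := qfact_pos hq₀ hq a
  have := qfact_pos hq₀ hq m
  have := qfact_pos hq₀ hq (m - a)
  rw [qbinom, qbinom, Nat.add_sub_add_right, qfact_succ, qfact_succ]
  field_simp

end QAnalogues

noncomputable def Aterm (q : ℝ) (m j : ℕ) : ℝ :=
  (-1 : ℝ) ^ j * q ^ j.choose 2 * qbinom q (m - j) j

theorem Aseq_natCast (q : ℝ) (m : ℕ) :
    Aseq q m = ∑ j ∈ Finset.range (m / 2 + 1), Aterm q m j := by
  simp [Aseq, Aterm]

theorem Aseq_of_neg (q : ℝ) {m : ℤ} (hm : m < 0) : Aseq q m = 0 :=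
  if_pos hm

theorem Bseq_eq_sum_Aterm (q : ℝ) {n : ℕ} (hn : n ≠ 0) :
    Bseq q n = ∑ j ∈ Finset.range (n / 2 + 1), Aterm q n j * (qint q n / qint q (n - j)) :=
  if_neg hn

noncomputable def Bcorrection (q : ℝ) (n j : ℕ) : ℝ :=
  q ^ (n - j) * Aterm q n j * (qint q j / qint q (n - j))

theorem Bseq_sub_Aseq {q : ℝ} (hq₀ : 0 < q) (hq : q ≠ 1) {n : ℕ} (hn : n ≠ 0) :
    Bseq q n - Aseq q n = ∑ i ∈ Finset.range (n / 2), Bcorrection q n (i + 1) := by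
  rw [Bseq_eq_sum_Aterm q hn, Aseq_natCast, ← Finset.sum_sub_distrib]
  have correction : ∀ j ∈ Finset.range (n / 2 + 1),
      Aterm q n j * (qint q n / qint q (n - j)) - Aterm q n j = Bcorrection q n j := by
    intro j hj
    rw [Bcorrection]
    have hnj : n - j ≠ 0 := by have := Finset.mem_range.mp hj; omega
    have := qint_pos hq₀ hq hnj
    have hsplit := qint_add hq (n - j) j
    rw [Nat.sub_add_cancel (by omega)] at hsplit
    rw [hsplit]
    field_simp
    ring
  rw [Finset.sum_congr rfl correction, Finset.sum_range_succ', Bcorrection, qint_zero,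
    zero_div, mul_zero, add_zero]

theorem Bcorrection_succ {q : ℝ} (hq₀ : 0 < q) (hq : q ≠ 1) {m i : ℕ} (hi : i ≤ m) :
    Bcorrection q (m + 2) (i + 1) = -(q ^ (m + 1) * Aterm q m i) := by
  have hsub : m + 2 - (i + 1) = m - i + 1 := by omega
  have hpow : q ^ i * q ^ (m - i + 1) = q ^ (m + 1) := by rw [← pow_add]; congr 1; omega
  rw [Bcorrection, hsub, Aterm, Aterm, hsub, Nat.choose_succ_succ', Nat.choose_one_right,
    ← qbinom_succ_mul_qint_div hq₀ hq (m - i) i, ← hpow]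
  ring

theorem stmt_6_general (q : ℝ) (hq : 1 < q) (n : ℕ) :
    Bseq q n = Aseq q n - q ^ (n - 1) * Aseq q ((n : ℤ) - 2) := by
  have hq₀ : 0 < q := by linarith
  rcases n with _ | _ | m
  · simp [Bseq, Aseq, qbinom, qfact]
  · have h := Bseq_sub_Aseq hq₀ hq.ne' one_ne_zero
    rw [Aseq_of_neg q (by norm_num : ((0 + 1 : ℕ) : ℤ) - 2 < 0)]
    simpa [sub_eq_zero] using h
  · have h := Bseq_sub_Aseq hq₀ hq.ne' (m + 1).succ_ne_zero
    rw [show (m + 2) / 2 = m / 2 + 1 by omega] at h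
    rw [show ((m + 2 : ℕ) : ℤ) - 2 = m by push_cast; ring, Aseq_natCast q m, Finset.mul_sum]
    rw [Finset.sum_congr rfl fun i hi => Bcorrection_succ hq₀ hq.ne'
      (by have := Finset.mem_range.mp hi; omega), Finset.sum_neg_distrib] at h
    simp only [Nat.add_sub_cancel]
    linarith

/-- For all `n ≥ 1`, `B_n = A_n - q^{n-1} A_{n-2}`. -/
theorem stmt_6 (q : ℝ) (hq : 1 < q) (n : ℕ) (hn : 1 ≤ n) :
    Bseq q n = Aseq q n - q ^ (n - 1) * Aseq q ((n : ℤ) - 2) :=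
  stmt_6_general q hq n
end

section
/- Let n ≥ 1 and let the sequences satisfy n = n_1 ≥ n_2 ≥ ⋯ ≥ n_ℓ > n_{ℓ+1} = 0 (positive integers) and m = r_0 ≥ r_1 ≥ ⋯ ≥ r_ℓ ≥ r_{ℓ+1} = 0 (non-negative integers) with r_i − r_{i+1} ≤ n_i − n_{i+1} for 1 ≤ i ≤ ℓ. Then the number of n × m matrices A over F_q such that rank(A_i) = r_i for each 1 ≤ i ≤ ℓ, where A_i is the submatrix of A consisting of the first n_i rows, equals ∏_{j=1}^{ℓ} q^{r_{j+1}(n_j − n_{j+1})} · GaussBinom(m − r_{j+1}, r_j − r_{j+1}, q) · C^{r_j − r_{j+1}}_{n_j − n_{j+1}}, where C^r_l = (q^l − 1)(q^l − q)⋯(q^l − q^{r−1}). -/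
/-!
Split the rows of `A` into the first `n₂` rows `B` and the remaining `k = n₁ - n₂` rows `C`.
The conditions for `i ≥ 2` only concern `B`, which is an instance of the same problem with one
level fewer, while the condition for `i = 1` says that `C` raises the rank from
`r₂ = dim ⟨B⟩` to `r₁`. Modulo `W = ⟨B⟩` this says that the image of `C` in `F_qᵐ ⧸ W` spans an
`(r₁ - r₂)`-dimensional subspace, and every such image has `|W|ᵏ` lifts.

The `k`-tuples of a `d`-dimensional space spanning an `s`-dimensional subspace are counted fibrewise
over the subspaces of dimension `s`; the spanning `k`-tuples of `F_qˢ` are, after transposition,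
the linearly independent `s`-tuples of `F_qᵏ`, of which there are `∏_{t<s} (qᵏ - qᵗ)`. For `k = s`,
where spanning means independent, the same count shows that there are `[d, s]_q` such subspaces.
-/

/-- The Gaussian binomial coefficient evaluated at `q`, via the Pascal-type recurrence
`[n+1, k+1]_q = [n, k]_q + q^{k+1} [n, k+1]_q`. -/
def qbinomNat (q : ℕ) : ℕ → ℕ → ℕ
  | _, 0 => 1
  | 0, _ + 1 => 0
  | a + 1, b + 1 => qbinomNat q a b + q ^ (b + 1) * qbinomNat q a (b + 1)

open Finset Submodule Module
open scoped Matrix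

section QBinomial

lemma prod_range_succ_pow_sub_pow (q d s : ℕ) :
    ∏ t ∈ range (s + 1), (q ^ (d + 1) - q ^ t) =
      (q ^ (d + 1) - 1) * (q ^ s * ∏ t ∈ range s, (q ^ d - q ^ t)) := by
  have factor (t : ℕ) : q ^ (d + 1) - q ^ (t + 1) = q * (q ^ d - q ^ t) := by
    rw [Nat.mul_sub, pow_succ', pow_succ']
  simp only [prod_range_succ', factor, prod_mul_distrib, prod_const, card_range, pow_zero]
  ring

lemma qbinomNat_mul_prod_pow_sub_pow {q : ℕ} (hq : 1 ≤ q) (d s : ℕ) :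
    qbinomNat q d s * ∏ t ∈ range s, (q ^ s - q ^ t) = ∏ t ∈ range s, (q ^ d - q ^ t) := by
  induction d generalizing s with
  | zero =>
    cases s with
    | zero => simp [qbinomNat]
    | succ s => simp [qbinomNat, prod_range_succ']
  | succ d ih =>
    cases s with
    | zero => simp [qbinomNat]
    | succ s =>
      calc qbinomNat q (d + 1) (s + 1) * ∏ t ∈ range (s + 1), (q ^ (s + 1) - q ^ t)
          = (q ^ (s + 1) - 1) * q ^ s * (qbinomNat q d s * ∏ t ∈ range s, (q ^ s - q ^ t)) +
              q ^ (s + 1) * (qbinomNat q d (s + 1) *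
                ∏ t ∈ range (s + 1), (q ^ (s + 1) - q ^ t)) := by
            rw [qbinomNat, prod_range_succ_pow_sub_pow]; ring
        _ = q ^ s * (∏ t ∈ range s, (q ^ d - q ^ t)) *
              ((q ^ (s + 1) - 1) + q * (q ^ d - q ^ s)) := by
            rw [ih, ih, prod_range_succ]; ring
        _ = ∏ t ∈ range (s + 1), (q ^ (d + 1) - q ^ t) := by
          rw [prod_range_succ_pow_sub_pow]
          rcases le_or_gt s d with hsd | hds
          · have h1 : 1 ≤ q ^ (s + 1) := Nat.one_le_pow _ _ hq
            have h2 : q ^ (s + 1) ≤ q ^ (d + 1) := Nat.pow_le_pow_right hq (by omega)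
            have h3 : q * (q ^ d - q ^ s) = q ^ (d + 1) - q ^ (s + 1) := by
              rw [Nat.mul_sub, pow_succ', pow_succ']
            rw [h3, show q ^ (s + 1) - 1 + (q ^ (d + 1) - q ^ (s + 1)) = q ^ (d + 1) - 1 by omega]
            ring
          · rw [prod_eq_zero (f := fun t => q ^ d - q ^ t) (mem_range.mpr hds) (Nat.sub_self _)]
            simp

lemma prod_range_pow_sub_pow_pos {q : ℕ} (hq : 1 < q) (s : ℕ) :
    0 < ∏ t ∈ range s, (q ^ s - q ^ t) :=
  prod_pos fun _ ht => Nat.sub_pos_of_lt (Nat.pow_lt_pow_right hq (mem_range.mp ht))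

end QBinomial

section Cardinality

lemma Nat.card_eq_card_mul_of_forall_card_fiber {X I : Type*} [Finite X] [Finite I] (f : X → I)
    {E : ℕ} (h : ∀ i, Nat.card {x // f x = i} = E) : Nat.card X = Nat.card I * E := by
  have := Fintype.ofFinite I
  rw [← Nat.card_congr (Equiv.sigmaFiberEquiv f), Nat.card_sigma]
  simp [h, Nat.card_eq_fintype_card]

lemma Nat.card_subtype_prod_of_card_fiber {X Y : Type*} [Finite X] [Finite Y] (P : X → Prop)
    (Q : X → Y → Prop) (E : ℕ) (h : ∀ x, P x → Nat.card {y // Q x y} = E) :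
    Nat.card {p : X × Y // P p.1 ∧ Q p.1 p.2} = Nat.card {x // P x} * E := by
  have := Fintype.ofFinite {x // P x}
  let e : {p : X × Y // P p.1 ∧ Q p.1 p.2} ≃ Σ x : {x // P x}, {y // Q x y} :=
    { toFun p := ⟨⟨p.1.1, p.2.1⟩, ⟨p.1.2, p.2.2⟩⟩
      invFun s := ⟨⟨s.1.1, s.2.1⟩, s.1.2, s.2.2⟩
      left_inv _ := rfl
      right_inv _ := rfl }
  rw [Nat.card_congr e, Nat.card_sigma, sum_congr rfl fun x _ => h x.1 x.2, sum_const,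
    Finset.card_univ, Nat.card_eq_fintype_card, smul_eq_mul]

end Cardinality

section Tuples

variable {α : Type*}

lemma prod_Icc_one_succ {M : Type*} [CommMonoid M] (f : ℕ → M) (ℓ : ℕ) :
    ∏ j ∈ Icc 1 (ℓ + 1), f j = f 1 * ∏ j ∈ Icc 1 ℓ, f (j + 1) := by
  rw [← insert_Icc_add_one_left_eq_Icc (by omega : 1 ≤ ℓ + 1), prod_insert (by simp),
    ← image_add_right_Icc 1 ℓ 1, prod_image (by simp)]

lemma forall_Icc_one_succ_iff {R : ℕ → Prop} {ℓ : ℕ} :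
    (∀ i, 1 ≤ i → i ≤ ℓ + 1 → R i) ↔ R 1 ∧ ∀ i, 1 ≤ i → i ≤ ℓ → R (i + 1) := by
  refine ⟨fun h => ⟨h 1 le_rfl (by omega), fun i h1 h2 => h (i + 1) (by omega) (by omega)⟩, ?_⟩
  rintro ⟨h1, h⟩ (_ | _ | i) hi1 hi2
  · omega
  · exact h1
  · exact h (i + 1) (by omega) (by omega)

def Fin.prefixSuffixEquiv {N d : ℕ} (h : d ≤ N) :
    (Fin N → α) ≃ (Fin d → α) × (Fin (N - d) → α) :=
  (Equiv.arrowCongr (finSumFinEquiv.trans (finCongr (Nat.add_sub_cancel' h))).symm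
    (Equiv.refl α)).trans (Equiv.sumArrowEquivProdArrow _ _ _)

lemma Fin.prefixSuffixEquiv_fst {N d : ℕ} (h : d ≤ N) (A : Fin N → α) :
    (Fin.prefixSuffixEquiv h A).1 = A ∘ Fin.castLE h := rfl

lemma Fin.range_eq_union_prefixSuffixEquiv {N d : ℕ} (h : d ≤ N) (A : Fin N → α) :
    Set.range A =
      Set.range (Fin.prefixSuffixEquiv h A).1 ∪ Set.range (Fin.prefixSuffixEquiv h A).2 := by
  rw [← Set.Sum.elim_range,
    ← (finSumFinEquiv.trans (finCongr (Nat.add_sub_cancel' h))).surjective.range_comp A]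
  congr 1
  ext (i | i) <;> rfl

lemma Fin.image_lt_comp_castLE {N d c : ℕ} (h : d ≤ N) (A : Fin N → α) (hc : c ≤ d) :
    (A ∘ Fin.castLE h) '' {x | (x : ℕ) < c} = A '' {x | (x : ℕ) < c} := by
  rw [Set.image_comp]
  congr 1
  ext x
  exact ⟨fun ⟨y, hy, hyx⟩ => hyx ▸ hy, fun hx => ⟨⟨x, lt_of_lt_of_le hx hc⟩, hx, rfl⟩⟩

lemma Fin.image_lt_self {N : ℕ} (A : Fin N → α) : A '' {x | (x : ℕ) < N} = Set.range A := by
  rw [← Set.image_univ]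
  congr 1
  exact Set.eq_univ_of_forall Fin.is_lt

end Tuples

section LinearAlgebra

variable {K V : Type*} [DivisionRing K] [AddCommGroup V] [Module K V]

lemma span_range_subtype_comp_eq_iff {ι : Type*} (U : Submodule K V) (w : ι → U) :
    span K (Set.range (U.subtype ∘ w)) = U ↔ span K (Set.range w) = ⊤ := by
  rw [Set.range_comp, ← map_span]
  exact (map_injective_of_injective U.injective_subtype).eq_iff' (map_subtype_top U)

lemma exists_equiv_quotient_prod (W : Submodule K V) :
    ∃ e : V ≃ (V ⧸ W) × W, ∀ x, (e x).1 = W.mkQ x := by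
  obtain ⟨W', h⟩ := W.exists_isCompl
  refine ⟨(W.prodEquivOfIsCompl W' h).symm.toEquiv.trans ((Equiv.prodComm _ _).trans
    ((W.quotientEquivOfIsCompl W' h).symm.toEquiv.prodCongr (Equiv.refl _))), fun x => ?_⟩
  change (W.quotientEquivOfIsCompl W' h).symm ((W.prodEquivOfIsCompl W' h).symm x).2 = W.mkQ x
  rw [LinearEquiv.symm_apply_eq, prodEquivOfIsCompl_symm_apply, mkQ_apply,
    quotientEquivOfIsCompl_apply_mk]

lemma card_subtype_mkQ_comp {ι : Type*} (W : Submodule K V) (P : (ι → V ⧸ W) → Prop) :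
    Nat.card {C : ι → V // P (W.mkQ ∘ C)} = Nat.card {D // P D} * Nat.card (ι → W) := by
  obtain ⟨e, he⟩ := exists_equiv_quotient_prod W
  let E : (ι → V) ≃ (ι → V ⧸ W) × (ι → W) :=
    (Equiv.arrowCongr (Equiv.refl ι) e).trans (Equiv.arrowProdEquivProdArrow _ _ _)
  have hE (C : ι → V) : P (W.mkQ ∘ C) ↔ P (E C).1 := by
    rw [show (E C).1 = W.mkQ ∘ C from funext fun i => he (C i)]
  rw [← Nat.card_prod,
    Nat.card_congr ((E.subtypeEquiv hE).trans Equiv.prodSubtypeFstEquivSubtypeProd)]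

lemma finrank_sup_span_range_eq [FiniteDimensional K V] {ι : Type*} (W : Submodule K V)
    (C : ι → V) :
    finrank K ↥(W ⊔ span K (Set.range C)) =
      finrank K W + finrank K (span K (Set.range (W.mkQ ∘ C))) := by
  set P := W ⊔ span K (Set.range C)
  have hrange : LinearMap.range (W.mkQ ∘ₗ P.subtype) = span K (Set.range (W.mkQ ∘ C)) := by
    rw [LinearMap.range_comp, range_subtype, Submodule.map_sup, map_span, mkQ_map_self,
      bot_sup_eq, Set.range_comp]
  have hker : LinearMap.ker (W.mkQ ∘ₗ P.subtype) = W.comap P.subtype := by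
    rw [LinearMap.ker_comp, ker_mkQ]
  have := LinearMap.finrank_range_add_finrank_ker (W.mkQ ∘ₗ P.subtype)
  rw [hrange, hker, (comapSubtypeEquivOfLe le_sup_left).finrank_eq] at this
  omega

lemma forall_finrank_span_prefix_succ_iff {ℓ : ℕ} {nn rr : ℕ → ℕ}
    (hnn : AntitoneOn nn (Set.Icc 1 (ℓ + 2))) (h21 : nn 2 ≤ nn 1) (A : Fin (nn 1) → V) :
    (∀ i, 1 ≤ i → i ≤ ℓ + 1 → finrank K (span K (A '' {x | (x : ℕ) < nn i})) = rr i) ↔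
      (∀ i, 1 ≤ i → i ≤ ℓ → finrank K (span K
          ((Fin.prefixSuffixEquiv h21 A).1 '' {x | (x : ℕ) < nn (i + 1)})) = rr (i + 1)) ∧
        finrank K ↥(span K (Set.range (Fin.prefixSuffixEquiv h21 A).1) ⊔
          span K (Set.range (Fin.prefixSuffixEquiv h21 A).2)) = rr 1 := by
  rw [forall_Icc_one_succ_iff, and_comm]
  refine and_congr (forall_congr' fun i => forall_congr' fun h1 => forall_congr' fun h2 => ?_) ?_
  · have hle : nn (i + 1) ≤ nn 2 := hnn ⟨by omega, by omega⟩ ⟨by omega, by omega⟩ (by omega)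
    rw [Fin.prefixSuffixEquiv_fst, Fin.image_lt_comp_castLE h21 A hle]
  · rw [Fin.image_lt_self, Fin.range_eq_union_prefixSuffixEquiv h21, span_union]

end LinearAlgebra

lemma Matrix.linearIndependent_row_iff_rank_eq_card {F m n : Type*} [Field F] [Fintype m]
    [Fintype n] (M : Matrix m n F) : LinearIndependent F M.row ↔ M.rank = Fintype.card m := by
  rw [linearIndependent_iff_card_eq_finrank_span, M.rank_eq_finrank_span_row, Set.finrank, eq_comm]

lemma Matrix.span_range_eq_top_iff_linearIndependent_transpose {F : Type*} [Field F] {k s : ℕ}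
    (M : Matrix (Fin k) (Fin s) F) : span F (Set.range M) = ⊤ ↔ LinearIndependent F Mᵀ.row := by
  rw [Matrix.linearIndependent_row_iff_rank_eq_card, Matrix.rank_transpose,
    M.rank_eq_finrank_span_row, Fintype.card_fin]
  exact ⟨fun h => by rw [Matrix.row, h, finrank_top, finrank_fin_fun],
    fun h => eq_top_of_finrank_eq (by rw [finrank_fin_fun]; exact h)⟩

lemma Matrix.rank_submatrix_castLE {F : Type*} [Field F] {n m c : ℕ}
    (A : Matrix (Fin n) (Fin m) F) (h : c ≤ n) :
    (A.submatrix (Fin.castLE h) id).rank = finrank F (span F (A '' {x | (x : ℕ) < c})) := by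
  rw [Matrix.rank_eq_finrank_span_row, ← Fin.range_castLE h]
  exact congrArg (fun S => finrank F (span F S)) (Set.range_comp A (Fin.castLE h))

section FiniteField

variable {F V : Type*} [Field F] [Fintype F] [AddCommGroup V] [Module F V] [Finite V]

local notation "q" => Fintype.card F

lemma card_linearIndependent_fin (k : ℕ) :
    Nat.card {v : Fin k → V // LinearIndependent F v} =
      ∏ t ∈ range k, (q ^ finrank F V - q ^ t) := by
  rcases le_or_gt k (finrank F V) with hk | hk
  · rw [card_linearIndependent hk, Fin.prod_univ_eq_prod_range (fun t => q ^ finrank F V - q ^ t)]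
  · rw [prod_eq_zero (f := fun t => q ^ finrank F V - q ^ t) (mem_range.mpr hk) (Nat.sub_self _),
      Nat.card_eq_zero]
    left
    refine ⟨fun ⟨v, hv⟩ => ?_⟩
    have := hv.fintype_card_le_finrank
    rw [Fintype.card_fin] at this
    omega

lemma card_span_range_eq_top (k : ℕ) :
    Nat.card {w : Fin k → V // span F (Set.range w) = ⊤} =
      ∏ t ∈ range (finrank F V), (q ^ k - q ^ t) := by
  let b := (Module.finBasis F V).equivFun
  let e : (Fin k → V) ≃ (Fin (finrank F V) → Fin k → F) :=
    (Equiv.arrowCongr (Equiv.refl _) b.toEquiv).trans (Equiv.piComm _)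
  have he (w : Fin k → V) : span F (Set.range w) = ⊤ ↔ LinearIndependent F (e w) := by
    change _ ↔ LinearIndependent F (Matrix.of fun i => b (w i))ᵀ.row
    rw [← Matrix.span_range_eq_top_iff_linearIndependent_transpose,
      ← Submodule.map_eq_top_iff (e := b), Submodule.map_span, ← Set.range_comp]
    rfl
  rw [Nat.card_congr (e.subtypeEquiv he : _ ≃ {N // LinearIndependent F N}),
    card_linearIndependent_fin, finrank_fin_fun]

lemma card_span_range_eq (U : Submodule F V) (k : ℕ) :
    Nat.card {v : Fin k → V // span F (Set.range v) = U} =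
      ∏ t ∈ range (finrank F U), (q ^ k - q ^ t) := by
  rw [← card_span_range_eq_top]
  exact Nat.card_congr
    { toFun v := ⟨fun j => ⟨v.1 j, v.2.le (subset_span ⟨j, rfl⟩)⟩,
        (span_range_subtype_comp_eq_iff U _).mp v.2⟩
      invFun w := ⟨U.subtype ∘ w.1, (span_range_subtype_comp_eq_iff U _).mpr w.2⟩
      left_inv _ := rfl
      right_inv _ := rfl }

lemma card_finrank_span_range_eq_mul (k s : ℕ) :
    Nat.card {v : Fin k → V // finrank F (span F (Set.range v)) = s} =
      Nat.card {U : Submodule F V // finrank F U = s} * ∏ t ∈ range s, (q ^ k - q ^ t) := by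
  refine Nat.card_eq_card_mul_of_forall_card_fiber (fun v => ⟨span F (Set.range v.1), v.2⟩)
    fun U => ?_
  calc _ = Nat.card {v : Fin k → V // span F (Set.range v) = U} := Nat.card_congr
        { toFun x := ⟨x.1.1, congrArg Subtype.val x.2⟩
          invFun v := ⟨⟨v.1, by rw [v.2]; exact U.2⟩, Subtype.ext v.2⟩
          left_inv _ := rfl
          right_inv _ := rfl }
    _ = ∏ t ∈ range s, (q ^ k - q ^ t) := by rw [card_span_range_eq, U.2]

lemma card_submodule_finrank_eq (s : ℕ) :
    Nat.card {U : Submodule F V // finrank F U = s} = qbinomNat q (finrank F V) s := by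
  have hq : 1 < q := Fintype.one_lt_card
  have hindep (v : Fin s → V) : finrank F (span F (Set.range v)) = s ↔ LinearIndependent F v := by
    rw [linearIndependent_iff_card_eq_finrank_span, Fintype.card_fin, Set.finrank, eq_comm]
  have h := card_finrank_span_range_eq_mul (F := F) (V := V) s s
  rw [Nat.card_congr (Equiv.subtypeEquivRight hindep), card_linearIndependent_fin,
    ← qbinomNat_mul_prod_pow_sub_pow hq.le] at h
  exact (Nat.eq_of_mul_eq_mul_right (prod_range_pow_sub_pow_pos hq s) h).symm

lemma card_finrank_sup_span_range_eq (W : Submodule F V) (k : ℕ) {r : ℕ}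
    (hr : finrank F W ≤ r) :
    Nat.card {C : Fin k → V // finrank F ↥(W ⊔ span F (Set.range C)) = r} =
      q ^ (finrank F W * k) * qbinomNat q (finrank F V - finrank F W) (r - finrank F W) *
        ∏ t ∈ range (r - finrank F W), (q ^ k - q ^ t) := by
  have : Finite (V ⧸ W) := Finite.of_surjective _ W.mkQ_surjective
  have hC (C : Fin k → V) : finrank F ↥(W ⊔ span F (Set.range C)) = r ↔
      finrank F (span F (Set.range (W.mkQ ∘ C))) = r - finrank F W := by
    rw [finrank_sup_span_range_eq]
    omega
  simp_rw [hC]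
  rw [card_subtype_mkQ_comp W (fun D => finrank F (span F (Set.range D)) = r - finrank F W),
    card_finrank_span_range_eq_mul, card_submodule_finrank_eq, finrank_quotient, Nat.card_fun,
    natCard_eq_pow_finrank (K := F), Nat.card_eq_fintype_card (α := F), Nat.card_fin, ← pow_mul]
  ring

theorem card_finrank_span_prefix_eq {ℓ : ℕ} (nn rr : ℕ → ℕ)
    (hnn : AntitoneOn nn (Set.Icc 1 (ℓ + 1))) (hrr : AntitoneOn rr (Set.Icc 1 (ℓ + 1)))
    (hnn_end : nn (ℓ + 1) = 0) (hrr_end : rr (ℓ + 1) = 0) :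
    Nat.card {A : Fin (nn 1) → V //
        ∀ i, 1 ≤ i → i ≤ ℓ → finrank F (span F (A '' {x | (x : ℕ) < nn i})) = rr i} =
      ∏ j ∈ Icc 1 ℓ, q ^ (rr (j + 1) * (nn j - nn (j + 1))) *
        qbinomNat q (finrank F V - rr (j + 1)) (rr j - rr (j + 1)) *
        ∏ t ∈ range (rr j - rr (j + 1)), (q ^ (nn j - nn (j + 1)) - q ^ t) := by
  induction ℓ generalizing nn rr with
  | zero =>
    have : IsEmpty (Fin (nn 1)) := by rw [hnn_end]; infer_instance
    rw [Icc_eq_empty (by omega), prod_empty, Nat.card_eq_one_iff_unique]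
    exact ⟨inferInstance, ⟨⟨isEmptyElim, fun i h1 h2 => by omega⟩⟩⟩
  | succ ℓ ih =>
    have h21 : nn 2 ≤ nn 1 := hnn ⟨le_rfl, by omega⟩ ⟨by omega, by omega⟩ (by omega)
    have h12 : rr 2 ≤ rr 1 := hrr ⟨le_rfl, by omega⟩ ⟨by omega, by omega⟩ (by omega)
    let P (B : Fin (nn 2) → V) : Prop :=
      ∀ i, 1 ≤ i → i ≤ ℓ → finrank F (span F (B '' {x | (x : ℕ) < nn (i + 1)})) = rr (i + 1)
    let Q (B : Fin (nn 2) → V) (C : Fin (nn 1 - nn 2) → V) : Prop :=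
      finrank F ↥(span F (Set.range B) ⊔ span F (Set.range C)) = rr 1
    have hsplit : Nat.card {A : Fin (nn 1) → V // ∀ i, 1 ≤ i → i ≤ ℓ + 1 →
          finrank F (span F (A '' {x | (x : ℕ) < nn i})) = rr i} =
        Nat.card {p : (Fin (nn 2) → V) × (Fin (nn 1 - nn 2) → V) // P p.1 ∧ Q p.1 p.2} :=
      Nat.card_congr ((Fin.prefixSuffixEquiv h21).subtypeEquiv
        (forall_finrank_span_prefix_succ_iff hnn h21))
    have hfiber (B : Fin (nn 2) → V) (hB : P B) :
        Nat.card {C // Q B C} = q ^ (rr 2 * (nn 1 - nn 2)) *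
          qbinomNat q (finrank F V - rr 2) (rr 1 - rr 2) *
          ∏ t ∈ range (rr 1 - rr 2), (q ^ (nn 1 - nn 2) - q ^ t) := by
      have hW : finrank F (span F (Set.range B)) = rr 2 := by
        rcases Nat.eq_zero_or_pos ℓ with rfl | hℓ
        · have : IsEmpty (Fin (nn 2)) := by rw [hnn_end]; infer_instance
          rw [Set.range_eq_empty, span_empty, finrank_bot, hrr_end]
        · have := hB 1 le_rfl hℓ
          rwa [Fin.image_lt_self] at this
      rw [card_finrank_sup_span_range_eq _ _ (hW ▸ h12), hW]
    rw [hsplit, Nat.card_subtype_prod_of_card_fiber P Q _ hfiber,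
      ih (fun i => nn (i + 1)) (fun i => rr (i + 1))
        (fun a ⟨_, ha⟩ b ⟨_, hb⟩ hab => hnn ⟨by omega, by omega⟩ ⟨by omega, by omega⟩ (by omega))
        (fun a ⟨_, ha⟩ b ⟨_, hb⟩ hab => hrr ⟨by omega, by omega⟩ ⟨by omega, by omega⟩ (by omega))
        hnn_end hrr_end,
      prod_Icc_one_succ, mul_comm]

end FiniteField

theorem stmt_10_general (q : ℕ)
    (F : Type*) [Field F] [Fintype F] (hF : Fintype.card F = q)
    (n m ℓ : ℕ)
    (nn rr : ℕ → ℕ)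
    (hnn1 : nn 1 = n)
    (hnnmono : ∀ i, 1 ≤ i → i < ℓ → nn (i + 1) ≤ nn i)
    (hnnend : nn (ℓ + 1) = 0)
    (hrmono : ∀ i, i ≤ ℓ → rr (i + 1) ≤ rr i)
    (hrend : rr (ℓ + 1) = 0)
    (hle : ∀ i, 1 ≤ i → i ≤ ℓ → nn i ≤ n) :
    Nat.card {A : Matrix (Fin n) (Fin m) F //
        ∀ i, ∀ h1 : 1 ≤ i, ∀ h2 : i ≤ ℓ, (A.submatrix (Fin.castLE (hle i h1 h2)) id).rank = rr i} =
      ∏ j ∈ Finset.Icc 1 ℓ,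
        q ^ (rr (j + 1) * (nn j - nn (j + 1))) *
          qbinomNat q (m - rr (j + 1)) (rr j - rr (j + 1)) *
          ∏ t ∈ Finset.range (rr j - rr (j + 1)), (q ^ (nn j - nn (j + 1)) - q ^ t) := by
  subst hF hnn1
  have hnn : AntitoneOn nn (Set.Icc 1 (ℓ + 1)) :=
    antitoneOn_of_add_one_le Set.ordConnected_Icc fun a _ ha hb => by
      rcases lt_or_eq_of_le (Nat.le_of_add_le_add_right hb.2) with h | rfl
      · exact hnnmono a ha.1 h
      · exact hnnend ▸ Nat.zero_le _
  have hrr : AntitoneOn rr (Set.Icc 1 (ℓ + 1)) :=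
    antitoneOn_of_add_one_le Set.ordConnected_Icc fun a _ _ hb => hrmono a (Nat.le_of_add_le_add_right hb.2)
  simp_rw [Matrix.rank_submatrix_castLE]
  exact (card_finrank_span_prefix_eq nn rr hnn hrr hnnend hrend).trans (by rw [finrank_fin_fun])

/-- The number of `n × m` matrices over `F_q` whose top `nn i` rows have rank `rr i`
for `1 ≤ i ≤ ℓ`, given a rank profile compatible with the row-count profile, equals
`∏_{j=1}^{ℓ} q^{rr(j+1)(nn j - nn(j+1))} GaussBinom(m - rr(j+1), rr j - rr(j+1), q)
  ⋅ C^{rr j - rr(j+1)}_{nn j - nn(j+1)}` where `C^r_l = ∏_{t<r} (q^l - q^t)`. -/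
theorem stmt_10 (q : ℕ) (hq : IsPrimePow q)
    (F : Type*) [Field F] [Fintype F] (hF : Fintype.card F = q)
    (n m ℓ : ℕ) (hn : 1 ≤ n) (hℓ : 1 ≤ ℓ)
    (nn rr : ℕ → ℕ)
    (hnn1 : nn 1 = n)
    (hnnmono : ∀ i, 1 ≤ i → i < ℓ → nn (i + 1) ≤ nn i)
    (hnnpos : ∀ i, 1 ≤ i → i ≤ ℓ → 0 < nn i)
    (hnnend : nn (ℓ + 1) = 0)
    (hr0 : rr 0 = m)
    (hrmono : ∀ i, i ≤ ℓ → rr (i + 1) ≤ rr i)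
    (hrend : rr (ℓ + 1) = 0)
    (hstep : ∀ i, 1 ≤ i → i ≤ ℓ → rr i - rr (i + 1) ≤ nn i - nn (i + 1))
    (hle : ∀ i, 1 ≤ i → i ≤ ℓ → nn i ≤ n) :
    Nat.card {A : Matrix (Fin n) (Fin m) F //
        ∀ i, ∀ h1 : 1 ≤ i, ∀ h2 : i ≤ ℓ, (A.submatrix (Fin.castLE (hle i h1 h2)) id).rank = rr i} =
      ∏ j ∈ Finset.Icc 1 ℓ,
        q ^ (rr (j + 1) * (nn j - nn (j + 1))) *
          qbinomNat q (m - rr (j + 1)) (rr j - rr (j + 1)) *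
          ∏ t ∈ Finset.range (rr j - rr (j + 1)), (q ^ (nn j - nn (j + 1)) - q ^ t) :=
  stmt_10_general q F hF n m ℓ nn rr hnn1 hnnmono hnnend hrmono hrend hle
end

section
/- Let h ∈ H_n be a Hessenberg function and let P_h be the poset on [n] with i ≺_h j iff h(i) < j. If μ ⊴ λ_{P_h} is a partition of n (where λ_{P_h} is the Greene–Kleitman shape of P_h), then [n] can be partitioned into ℓ(μ) chains of P_h whose cardinalities are exactly the parts μ_1, ..., μ_{ℓ(μ)} of μ. -/
/-!
The chains are built greedily: scan `0, 1, …, n - 1` and put each element `x` into a chain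
that can take it (its last element `a` has `h a < x`) and, among those, has the largest
remaining demand. The invariant is a Hall-type condition: every set `U` of unscanned
elements has at most `∑ᵢ min (remᵢ, cᵢ(U))` elements, where `remᵢ` is the remaining demand of
chain `i` and `cᵢ(U)` the longest chain of `P_h` inside the part of `U` that chain `i` may
still use. At the start, with `c` the longest chain of `U` and `k` the number of parts
`μᵢ ≥ c`, this is the dominance condition for `k` chains, because `k` chains meet `U` in at
most `k c` elements. The greedy step preserves it because the longest chain of
`insert x U` is one more than the longest chain of `U` above `h x`.
-/

open Finset Function

lemma Fintype.sum_eq_add_of_forall_ne {ι M : Type*} [Fintype ι] [DecidableEq ι] [AddCommMonoid M]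
    {f g : ι → M} (i₀ : ι) {δ : M} (h₀ : f i₀ = g i₀ + δ) (h : ∀ i ≠ i₀, f i = g i) :
    ∑ i, f i = ∑ i, g i + δ := by
  have hcompl : ∑ i ∈ {i₀}ᶜ, f i = ∑ i ∈ {i₀}ᶜ, g i :=
    Finset.sum_congr rfl fun i hi => h i (by simpa using hi)
  rw [Fintype.sum_eq_add_sum_compl i₀ f, Fintype.sum_eq_add_sum_compl i₀ g, h₀, hcompl,
    add_right_comm]

lemma le_sum_range_min_of_forall_sum_range_add_le {μ : ℕ → ℕ} (hμ : Antitone μ) {s n m c : ℕ}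
    (hsum : ∑ i ∈ range s, μ i = n) (hle : ∀ k ≤ s, ∑ i ∈ range k, μ i + m ≤ n + k * c) :
    m ≤ ∑ i ∈ range s, min (μ i) c := by
  have hex : ∃ k, s ≤ k ∨ μ k < c := ⟨s, Or.inl le_rfl⟩
  set k := Nat.find hex
  have hks : k ≤ s := Nat.find_min' hex (Or.inl le_rfl)
  have hbig : ∀ i < k, c ≤ μ i := fun i hi => not_lt.1 (not_or.1 (Nat.find_min hex hi)).2
  have hsmall : ∀ i ∈ Ico k s, μ i ≤ c := fun i hi => by
    obtain ⟨hki, his⟩ := mem_Ico.1 hi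
    rcases Nat.find_spec hex with hsk | hμk
    · omega
    · exact (hμ hki).trans hμk.le
  have hmin : ∑ i ∈ range s, min (μ i) c = k * c + ∑ i ∈ Ico k s, μ i := by
    rw [← sum_range_add_sum_Ico _ hks,
      sum_congr rfl fun i hi => min_eq_right (hbig i (mem_range.1 hi)),
      sum_congr rfl fun i hi => min_eq_left (hsmall i hi), sum_const, card_range, smul_eq_mul]
  have := hle k hks
  rw [← sum_range_add_sum_Ico _ hks] at hsum
  omega

section Chains

variable {α : Type*} [LinearOrder α] (h : α → α)

open Classical in
noncomputable def maxChainCard (U : Finset α) : ℕ :=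
  ({C ∈ U.powerset | IsChain (h · < ·) (C : Set α)} : Finset (Finset α)).sup card

variable {h}

lemma card_le_maxChainCard {C U : Finset α} (hCU : C ⊆ U) (hC : IsChain (h · < ·) (C : Set α)) :
    #C ≤ maxChainCard h U := by
  classical
  exact le_sup (f := card) (mem_filter.2 ⟨mem_powerset.2 hCU, hC⟩)

lemma exists_isChain_card_eq_maxChainCard (U : Finset α) :
    ∃ C ⊆ U, IsChain (h · < ·) (C : Set α) ∧ #C = maxChainCard h U := by
  classical
  obtain ⟨C, hC, hcard⟩ := exists_mem_eq_sup
    ({C ∈ U.powerset | IsChain (h · < ·) (C : Set α)} : Finset (Finset α))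
    ⟨∅, mem_filter.2 ⟨empty_mem_powerset U, by rw [coe_empty]; exact IsChain.empty⟩⟩ card
  obtain ⟨hCU, hCchain⟩ := mem_filter.1 hC
  exact ⟨C, mem_powerset.1 hCU, hCchain, hcard.symm⟩

lemma maxChainCard_mono {U V : Finset α} (hUV : U ⊆ V) : maxChainCard h U ≤ maxChainCard h V := by
  obtain ⟨C, hCU, hC, hcard⟩ := exists_isChain_card_eq_maxChainCard (h := h) U
  exact hcard ▸ card_le_maxChainCard (hCU.trans hUV) hC

lemma maxChainCard_le_card (U : Finset α) : maxChainCard h U ≤ #U := by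
  obtain ⟨C, hCU, -, hcard⟩ := exists_isChain_card_eq_maxChainCard (h := h) U
  exact hcard ▸ card_le_card hCU

lemma IsChain.apply_lt (hge : ∀ a, a ≤ h a) {C : Set α} (hC : IsChain (h · < ·) C) {a b : α}
    (ha : a ∈ C) (hb : b ∈ C) (hab : a < b) : h a < b :=
  (hC ha hb hab.ne).resolve_right fun hba => (hab.trans_le (hge b)).not_gt hba

lemma maxChainCard_le_filter_add_one (hmono : Monotone h) (hge : ∀ a, a ≤ h a) {U : Finset α}
    {x : α} (hU : ∀ a ∈ U, x ≤ a) :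
    maxChainCard h U ≤ maxChainCard h {a ∈ U | h x < a} + 1 := by
  obtain ⟨C, hCU, hC, hcard⟩ := exists_isChain_card_eq_maxChainCard (h := h) U
  rw [← hcard]
  rcases C.eq_empty_or_nonempty with rfl | hne
  · simp
  -- Beyond its least element `m`, a chain lies above `h m ≥ h x`.
  have hm := C.min'_mem hne
  have hsub : C.erase (C.min' hne) ⊆ {a ∈ U | h x < a} := fun a ha => by
    obtain ⟨hne', haC⟩ := mem_erase.1 ha
    refine mem_filter.2 ⟨hCU haC, (hmono (hU _ (hCU hm))).trans_lt ?_⟩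
    exact hC.apply_lt hge hm haC ((C.min'_le a haC).lt_of_ne' hne')
  have := card_le_maxChainCard hsub (hC.mono (by simp))
  rw [card_erase_of_mem hm] at this
  omega

lemma maxChainCard_insert (hmono : Monotone h) (hge : ∀ a, a ≤ h a) {U : Finset α} {x : α}
    (hU : ∀ a ∈ U, x < a) :
    maxChainCard h (insert x U) = maxChainCard h {a ∈ U | h x < a} + 1 := by
  apply le_antisymm
  · obtain ⟨C, hCU, hC, hcard⟩ := exists_isChain_card_eq_maxChainCard (h := h) (insert x U)
    rw [← hcard]
    by_cases hx : x ∈ C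
    · have hsub : C.erase x ⊆ {a ∈ U | h x < a} := fun a ha => by
        obtain ⟨hax, haC⟩ := mem_erase.1 ha
        have haU := (mem_insert.1 (hCU haC)).resolve_left hax
        exact mem_filter.2 ⟨haU, hC.apply_lt hge hx haC (hU a haU)⟩
      have := card_le_maxChainCard hsub (hC.mono (by simp))
      rw [card_erase_of_mem hx] at this
      omega
    · have hsub : C ⊆ U := fun a ha =>
        (mem_insert.1 (hCU ha)).resolve_left fun hax => hx (hax ▸ ha)
      exact (card_le_maxChainCard hsub hC).trans
        (maxChainCard_le_filter_add_one hmono hge fun a ha => (hU a ha).le)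
  · obtain ⟨C, hCU, hC, hcard⟩ :=
      exists_isChain_card_eq_maxChainCard (h := h) {a ∈ U | h x < a}
    have hxC : ∀ b ∈ C, h x < b := fun b hb => (mem_filter.1 (hCU hb)).2
    have hx : x ∉ C := fun hx => (hxC x hx).not_ge (hge x)
    have hchain : IsChain (h · < ·) (insert x C : Set α) :=
      hC.insert fun b hb _ => Or.inl (hxC b hb)
    have := card_le_maxChainCard (insert_subset_insert x (hCU.trans (filter_subset _ _)))
      (by simpa using hchain)
    rwa [card_insert_of_notMem hx, hcard] at this

lemma card_biUnion_add_card_le [Fintype α] {κ : Type*} (t : Finset κ) {Cs : κ → Finset α}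
    (hCs : ∀ j ∈ t, IsChain (h · < ·) (Cs j : Set α)) (U : Finset α) :
    #(t.biUnion Cs) + #U ≤ Fintype.card α + #t * maxChainCard h U := by
  have hinter : #(t.biUnion Cs ∩ U) ≤ #t * maxChainCard h U := by
    rw [biUnion_inter]
    exact card_biUnion_le_card_mul _ _ _ fun j hj =>
      card_le_maxChainCard inter_subset_right ((hCs j hj).mono (by simp))
  have := card_union_add_card_inter (t.biUnion Cs) U
  have := card_le_univ (t.biUnion Cs ∪ U)
  omega

end Chains

section Greedy

variable {n : ℕ} (h : Fin n → Fin n) {ι : Type*}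

/- Chain `i` still needs `rem i` elements, all of them `≥ r i`: `r i` is one more than `h` of the
last element of the chain. Elements `< x` have already been placed. -/
def IsFilling (rem r : ι → ℕ) (x : ℕ) (D : ι → Finset (Fin n)) : Prop :=
  Pairwise (Disjoint on D) ∧
    ∀ i, IsChain (h · < ·) (D i : Set (Fin n)) ∧ #(D i) = rem i ∧ ∀ a ∈ D i, x ≤ a ∧ r i ≤ a

variable {h}

lemma IsFilling.insert [DecidableEq ι] {rem r : ι → ℕ} {x : Fin n} {i₀ : ι}
    {D : ι → Finset (Fin n)}
    (hD : IsFilling h (update rem i₀ (rem i₀ - 1)) (update r i₀ ((h x : ℕ) + 1)) ((x : ℕ) + 1) D)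
    (hr₀ : r i₀ ≤ x) (hrem₀ : 0 < rem i₀) :
    IsFilling h rem r x (update D i₀ (insert x (D i₀))) := by
  obtain ⟨hdisj, hD⟩ := hD
  have hxD : ∀ i, x ∉ D i := fun i hx => by have := ((hD i).2.2 x hx).1; omega
  refine ⟨fun i j hij => ?_, fun i => ?_⟩
  · simp only [onFun, update_apply]
    split_ifs with hi hj hj
    · exact absurd (hi.trans hj.symm) hij
    · exact disjoint_insert_left.2 ⟨hxD j, hi ▸ hdisj hij⟩
    · exact disjoint_insert_right.2 ⟨hxD i, hj ▸ hdisj hij⟩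
    · exact hdisj hij
  rcases eq_or_ne i i₀ with rfl | hi
  · obtain ⟨hchain, hcard, hmem⟩ := hD i
    simp only [update_self] at hcard hmem ⊢
    refine ⟨?_, ?_, fun a ha => ?_⟩
    · rw [coe_insert]
      exact hchain.insert fun b hb _ => Or.inl (Fin.lt_def.2 (hmem b hb).2)
    · rw [card_insert_of_notMem (hxD i), hcard]
      omega
    · rcases mem_insert.1 ha with rfl | ha
      · exact ⟨le_rfl, hr₀⟩
      · have := hmem a ha
        omega
  · obtain ⟨hchain, hcard, hmem⟩ := hD i
    simp only [update_of_ne hi] at hcard hmem ⊢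
    exact ⟨hchain, hcard, fun a ha => ⟨by have := (hmem a ha).1; omega, (hmem a ha).2⟩⟩

variable (h) [Fintype ι]

noncomputable def capacity (rem r : ι → ℕ) (U : Finset (Fin n)) : ℕ :=
  ∑ i, min (rem i) (maxChainCard h {a ∈ U | r i ≤ a})

def HallCondition (rem r : ι → ℕ) (x : ℕ) : Prop :=
  ∀ U : Finset (Fin n), (∀ a ∈ U, x ≤ (a : ℕ)) → #U ≤ capacity h rem r U

variable {h}

lemma HallCondition.exists_greedy_choice {rem r : ι → ℕ} {x : Fin n}
    (hall : HallCondition h rem r x) :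
    ∃ i₀, r i₀ ≤ x ∧ 0 < rem i₀ ∧ ∀ i, r i ≤ x → rem i ≤ rem i₀ := by
  have hcap : capacity h rem r {x} ≠ 0 :=
    Nat.one_le_iff_ne_zero.1 (by simpa using hall {x} (by simp))
  obtain ⟨i, -, hi⟩ := exists_ne_zero_of_sum_ne_zero hcap
  rw [Ne, Nat.min_eq_zero_iff, not_or] at hi
  obtain ⟨a, ha⟩ : ({x} : Finset (Fin n)).filter (fun a : Fin n => r i ≤ a) |>.Nonempty := by
    have := maxChainCard_le_card (h := h) (({x} : Finset (Fin n)).filter fun a : Fin n => r i ≤ a)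
    exact card_pos.1 (by omega)
  rw [mem_filter, mem_singleton] at ha
  have hri : r i ≤ x := ha.1 ▸ ha.2
  obtain ⟨i₀, hi₀, hmax⟩ := exists_max_image {i | r i ≤ x} rem ⟨i, by simpa using hri⟩
  refine ⟨i₀, (mem_filter.1 hi₀).2, ?_, fun j hj => hmax j (by simpa using hj)⟩
  exact (Nat.pos_of_ne_zero hi.1).trans_le (hmax i (by simpa using hri))

lemma HallCondition.assign [DecidableEq ι] (hmono : Monotone h) (hge : ∀ a, a ≤ h a)
    {rem r : ι → ℕ} {x : Fin n} (hall : HallCondition h rem r x) {i₀ : ι} (hr₀ : r i₀ ≤ x)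
    (hrem₀ : 0 < rem i₀) (hmax : ∀ i, r i ≤ x → rem i ≤ rem i₀) :
    HallCondition h (update rem i₀ (rem i₀ - 1)) (update r i₀ ((h x : ℕ) + 1)) ((x : ℕ) + 1) := by
  intro U hU
  set rem' := update rem i₀ (rem i₀ - 1)
  set r' := update r i₀ ((h x : ℕ) + 1)
  have hxU : ∀ a ∈ U, x < a := fun a ha => Fin.lt_def.2 (hU a ha)
  set g₀ := maxChainCard h U
  set gₕ := maxChainCard h {a ∈ U | h x < a}
  have hle : gₕ ≤ g₀ := maxChainCard_mono (filter_subset _ _)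
  have hle' : g₀ ≤ gₕ + 1 := maxChainCard_le_filter_add_one hmono hge fun a ha => (hxU a ha).le
  have hfilter : ∀ i, r i ≤ x → {a ∈ U | r i ≤ (a : Fin n)} = U := fun i hi =>
    filter_true_of_mem fun a ha => hi.trans (hxU a ha).le
  have hnew₀ : min (rem' i₀) (maxChainCard h {a ∈ U | r' i₀ ≤ (a : Fin n)}) =
      min (rem i₀ - 1) gₕ := by
    simp only [rem', r', update_self, Nat.succ_le_iff, ← Fin.lt_def, gₕ]
  have hnew : ∀ i ≠ i₀, min (rem' i) (maxChainCard h {a ∈ U | r' i ≤ (a : Fin n)}) =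
      min (rem i) (maxChainCard h {a ∈ U | r i ≤ (a : Fin n)}) := fun i hi => by
    simp only [rem', r', update_of_ne hi]
  -- If the term of `i₀` does not drop, the old condition for `U` suffices; otherwise the old
  -- condition for `insert x U` exceeds the new one for `U` by exactly one.
  by_cases hA : g₀ = gₕ ∧ gₕ < rem i₀
  · have hcap : capacity h rem r U = capacity h rem' r' U + 0 :=
      Fintype.sum_eq_add_of_forall_ne i₀ (by rw [hnew₀, hfilter i₀ hr₀]; omega)
        fun i hi => (hnew i hi).symm
    exact (hall U fun a ha => (hxU a ha).le).trans hcap.le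
  · have hcap : capacity h rem r (insert x U) = capacity h rem' r' U + 1 := by
      refine Fintype.sum_eq_add_of_forall_ne i₀ ?_ fun i hi => ?_
      · rw [hnew₀, filter_insert, if_pos hr₀, hfilter i₀ hr₀, maxChainCard_insert hmono hge hxU]
        omega
      · rw [hnew i hi, filter_insert]
        split_ifs with hri
        · rw [hfilter i hri, maxChainCard_insert hmono hge hxU]
          have := hmax i hri
          omega
        · rfl
    have := hall (insert x U) fun a ha => by
      rcases mem_insert.1 ha with rfl | ha
      exacts [le_rfl, (hxU a ha).le]
    rw [card_insert_of_notMem fun hx => (hxU x hx).false] at this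
    omega

theorem HallCondition.exists_isFilling (hmono : Monotone h) (hge : ∀ a, a ≤ h a)
    {rem r : ι → ℕ} {x : ℕ} (hsum : ∑ i, rem i = n - x) (hall : HallCondition h rem r x) :
    ∃ D, IsFilling h rem r x D := by
  classical
  by_cases hx : n ≤ x
  · refine ⟨fun _ => ∅, fun i j _ => disjoint_empty_left _, fun i => ⟨by simp, ?_, by simp⟩⟩
    rw [card_empty, eq_comm]
    exact sum_eq_zero_iff.1 (by omega) i (mem_univ i)
  let y : Fin n := ⟨x, by omega⟩
  obtain ⟨i₀, hr₀, hrem₀, hmax⟩ := hall.exists_greedy_choice (x := y)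
  have hsum' : ∑ i, update rem i₀ (rem i₀ - 1) i = n - (x + 1) := by
    have := Fintype.sum_eq_add_of_forall_ne (f := rem) (g := update rem i₀ (rem i₀ - 1)) i₀ (δ := 1)
      (by rw [update_self]; omega) fun i hi => (update_of_ne hi _ rem).symm
    omega
  obtain ⟨D, hD⟩ := HallCondition.exists_isFilling hmono hge hsum'
    (hall.assign (x := y) hmono hge hr₀ hrem₀ hmax)
  exact ⟨_, hD.insert hr₀ hrem₀⟩
termination_by n - x

theorem HallCondition.exists_partition (hmono : Monotone h) (hge : ∀ a, a ≤ h a)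
    {rem r : ι → ℕ} (hsum : ∑ i, rem i = n) (hall : HallCondition h rem r 0) :
    ∃ D : ι → Finset (Fin n), Pairwise (Disjoint on D) ∧
      (∀ i, IsChain (h · < ·) (D i : Set (Fin n))) ∧ univ.biUnion D = univ ∧
      ∀ i, #(D i) = rem i := by
  obtain ⟨D, hdisj, hD⟩ := hall.exists_isFilling hmono hge (by simpa using hsum)
  refine ⟨D, hdisj, fun i => (hD i).1, eq_univ_of_card _ ?_, fun i => (hD i).2.1⟩
  rw [card_biUnion fun i _ j _ hij => hdisj hij, Fintype.card_fin]
  exact (sum_congr rfl fun i _ => (hD i).2.1).trans hsum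

lemma hallCondition_of_dominance {s : ℕ} {μ : ℕ → ℕ} (hanti : Antitone μ)
    (hsum : ∑ i ∈ range s, μ i = n)
    (hdom : ∀ k, ∑ i ∈ range k, μ i ≤ sSup {N : ℕ | ∃ Cs : Fin k → Finset (Fin n),
      (∀ i, IsChain (h · < ·) (Cs i : Set (Fin n))) ∧ N = #(univ.biUnion Cs)}) :
    HallCondition h (fun i : Fin s => μ i) (fun _ => 0) 0 := by
  intro U _
  simp only [capacity, Nat.zero_le, filter_true]
  rw [Fin.sum_univ_eq_sum_range (fun i => min (μ i) (maxChainCard h U))]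
  refine le_sum_range_min_of_forall_sum_range_add_le hanti hsum fun k _ => ?_
  have hbound : ∑ i ∈ range k, μ i ≤ n + k * maxChainCard h U - #U := by
    refine (hdom k).trans (csSup_le ⟨_, fun _ => ∅, fun _ => by simp, rfl⟩ ?_)
    rintro _ ⟨Cs, hCs, rfl⟩
    have := card_biUnion_add_card_le univ (fun j _ => hCs j) U
    simp only [Fintype.card_fin, card_univ] at this
    omega
  have := card_le_univ U
  rw [Fintype.card_fin] at this
  omega

end Greedy

theorem stmt_12_general (n s : ℕ) (h : Fin n → Fin n) (hmono : Monotone h) (hge : ∀ i, i ≤ h i)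
    (μ : ℕ → ℕ)
    (hanti : ∀ i j, i ≤ j → μ j ≤ μ i)
    (hsum : ∑ i ∈ Finset.range s, μ i = n)
    (hdom : ∀ k, ∑ i ∈ Finset.range k, μ i ≤
      sSup {N : ℕ | ∃ Cs : Fin k → Finset (Fin n),
        (∀ i, ∀ a ∈ Cs i, ∀ b ∈ Cs i, a ≠ b → h a < b ∨ h b < a) ∧
        N = (Finset.univ.biUnion Cs).card}) :
    ∃ Cs : Fin s → Finset (Fin n),
      (∀ i j, i ≠ j → Disjoint (Cs i) (Cs j)) ∧
      (∀ i, ∀ a ∈ Cs i, ∀ b ∈ Cs i, a ≠ b → h a < b ∨ h b < a) ∧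
      Finset.univ.biUnion Cs = Finset.univ ∧
      (∀ i : Fin s, (Cs i).card = μ (i : ℕ)) := by
  have hall := hallCondition_of_dominance (h := h) hanti hsum hdom
  obtain ⟨D, hdisj, hchain, hcover, hcard⟩ :=
    hall.exists_partition hmono hge (by rwa [Fin.sum_univ_eq_sum_range (fun i => μ i)])
  exact ⟨D, fun i j hij => hdisj hij, hchain, hcover, hcard⟩

/-- Let `h` be a Hessenberg function on `[n]` and `P_h` the poset with `i ≺_h j ↔ h i < j`.
If `μ` is a partition of `n` dominated by the Greene–Kleitman shape of `P_h` (i.e. the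
partial sums of `μ` are bounded by the maximal cardinalities of unions of `k` chains),
then `[n]` can be partitioned into `ℓ(μ)` chains of `P_h` whose cardinalities are the
parts of `μ`. -/
theorem stmt_12 (n s : ℕ) (h : Fin n → Fin n) (hmono : Monotone h) (hge : ∀ i, i ≤ h i)
    (μ : ℕ → ℕ)
    (hpos : ∀ i < s, 0 < μ i) (hzero : ∀ i, s ≤ i → μ i = 0)
    (hanti : ∀ i j, i ≤ j → μ j ≤ μ i)
    (hsum : ∑ i ∈ Finset.range s, μ i = n)
    (hdom : ∀ k, ∑ i ∈ Finset.range k, μ i ≤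
      sSup {N : ℕ | ∃ Cs : Fin k → Finset (Fin n),
        (∀ i, ∀ a ∈ Cs i, ∀ b ∈ Cs i, a ≠ b → h a < b ∨ h b < a) ∧
        N = (Finset.univ.biUnion Cs).card}) :
    ∃ Cs : Fin s → Finset (Fin n),
      (∀ i j, i ≠ j → Disjoint (Cs i) (Cs j)) ∧
      (∀ i, ∀ a ∈ Cs i, ∀ b ∈ Cs i, a ≠ b → h a < b ∨ h b < a) ∧
      Finset.univ.biUnion Cs = Finset.univ ∧
      (∀ i : Fin s, (Cs i).card = μ (i : ℕ)) :=
  stmt_12_general n s h hmono hge μ hanti hsum hdom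
end

section
/- Let P_h be the poset associated to a Hessenberg function h ∈ H_n, with C_1, C_2 disjoint chains in P_h satisfying |C_1| > |C_2| + 1. Then there exist disjoint chains C_1', C_2' in P_h with C_1 ∪ C_2 = C_1' ∪ C_2', |C_1'| = |C_1| − 1, and |C_2'| = |C_2| + 1. -/
/-!
A finite set is a chain of `P_h` exactly when `h a < b` for all `a < b` in it. Cutting two chains
at a point `s` and exchanging their parts up to `s` produces two chains as soon as `h s` lies below
the part after `s` of the other chain (monotonicity of `h` handles the other pairs). So it suffices
to find `s ∈ C₁` at which `C₁` has exactly one more element `≤ s` than `C₂`, and no element of `C₂`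
lies in `(s, h s]`. The least `s ∈ C₁` such that fewer elements of `C₂` are `≤ h s` than elements
of `C₁` are `≤ s` does the job; it exists because `max C₁` qualifies when `|C₂| < |C₁|`.
-/

open Finset

section TailSwap

variable {α : Type*} [LinearOrder α] {h : α → α}

theorem IsChain.apply_lt_of_lt {C : Set α} (hC : IsChain (h · < ·) C) (hge : ∀ x, x ≤ h x)
    {a b : α} (ha : a ∈ C) (hb : b ∈ C) (hab : a < b) : h a < b :=
  (hC ha hb hab.ne).resolve_right fun hba => (hab.trans_le (hge b)).not_gt hba

def tailSwap (A B : Finset α) (s : α) : Finset α :=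
  A.filter (· ≤ s) ∪ B.filter (s < ·)

theorem isChain_tailSwap (hmono : Monotone h) {A B : Finset α} {s : α}
    (hA : IsChain (h · < ·) (A : Set α)) (hB : IsChain (h · < ·) (B : Set α))
    (hs : ∀ y ∈ B, s < y → h s < y) :
    IsChain (h · < ·) (tailSwap A B s : Set α) := by
  rw [tailSwap, coe_union, isChain_union]
  refine ⟨hA.mono (coe_subset.2 (filter_subset _ _)), hB.mono (coe_subset.2 (filter_subset _ _)),
    fun x hx y hy _ => Or.inl ?_⟩
  rw [mem_coe, mem_filter] at hx hy
  exact (hmono hx.2).trans_lt (hs y hy.1 hy.2)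

theorem card_tailSwap_add {A B : Finset α} (hAB : Disjoint A B) (s : α) :
    #(tailSwap A B s) + #(B.filter (· ≤ s)) = #(A.filter (· ≤ s)) + #B := by
  rw [tailSwap, card_union_of_disjoint (disjoint_filter_filter hAB), add_assoc,
    add_comm (#(B.filter _)), ← card_filter_add_card_filter_not (s := B) (· ≤ s)]
  simp only [not_le]

theorem tailSwap_union_tailSwap (A B : Finset α) (s : α) :
    tailSwap A B s ∪ tailSwap B A s = A ∪ B := by
  ext x
  simp only [tailSwap, mem_union, mem_filter]
  grind

theorem disjoint_tailSwap {A B : Finset α} (hAB : Disjoint A B) (s : α) :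
    Disjoint (tailSwap A B s) (tailSwap B A s) := by
  rw [disjoint_left]
  simp only [tailSwap, mem_union, mem_filter]
  grind [disjoint_left]

theorem exists_cut_of_card_lt (hge : ∀ x, x ≤ h x) {C₁ C₂ : Finset α}
    (hC₁ : IsChain (h · < ·) (C₁ : Set α)) (hdisj : Disjoint C₁ C₂) (hcard : #C₂ < #C₁) :
    ∃ s ∈ C₁, #(C₁.filter (· ≤ s)) = #(C₂.filter (· ≤ s)) + 1 ∧ ∀ y ∈ C₂, s < y → h s < y := by
  let good (s : α) : Prop := #(C₂.filter (· ≤ h s)) < #(C₁.filter (· ≤ s))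
  have hC₁ne : C₁.Nonempty := card_pos.1 (hcard.trans_le' (Nat.zero_le _))
  have hgood_ne : (C₁.filter good).Nonempty := by
    refine ⟨C₁.max' hC₁ne, mem_filter.2 ⟨max'_mem _ _, ?_⟩⟩
    change #(C₂.filter _) < #(C₁.filter _)
    rw [filter_true_of_mem fun x hx => C₁.le_max' x hx]
    exact hcard.trans_le' (card_filter_le _ _)
  set s := (C₁.filter good).min' hgood_ne
  obtain ⟨hsC₁, hs_good⟩ : s ∈ C₁ ∧ #(C₂.filter (· ≤ h s)) < #(C₁.filter (· ≤ s)) :=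
    mem_filter.1 (min'_mem _ _)
  -- The predecessor `t` of `s` in `C₁` is not good, and `h t < s`.
  have hbefore : #(C₁.filter (· < s)) ≤ #(C₂.filter (· < s)) := by
    rcases (C₁.filter (· < s)).eq_empty_or_nonempty with hempty | hne
    · simp [hempty]
    set t := (C₁.filter (· < s)).max' hne
    obtain ⟨htC₁, hts⟩ := mem_filter.1 ((C₁.filter (· < s)).max'_mem hne)
    have ht_bad : ¬ good t := fun ht =>
      hts.not_ge ((C₁.filter good).min'_le t (mem_filter.2 ⟨htC₁, ht⟩))
    have hpred : C₁.filter (· < s) = C₁.filter (· ≤ t) := by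
      ext x
      simp only [mem_filter, and_congr_right_iff]
      exact fun hx => ⟨fun hxs => (C₁.filter (· < s)).le_max' x (mem_filter.2 ⟨hx, hxs⟩),
        fun hxt => hxt.trans_lt hts⟩
    calc #(C₁.filter (· < s)) = #(C₁.filter (· ≤ t)) := by rw [hpred]
      _ ≤ #(C₂.filter (· ≤ h t)) := not_lt.1 ht_bad
      _ ≤ #(C₂.filter (· < s)) := card_le_card <| monotone_filter_right _ fun y _ hy =>
          hy.trans_lt (hC₁.apply_lt_of_lt hge htC₁ hsC₁ hts)
  have hsC₂ : s ∉ C₂ := disjoint_left.1 hdisj hsC₁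
  have hC₁s : #(C₁.filter (· ≤ s)) = #(C₁.filter (· < s)) + 1 := by
    rw [← card_insert_of_notMem (s := C₁.filter (· < s)) (a := s) (by simp)]
    congr 1
    ext x
    simp only [mem_filter, mem_insert, le_iff_lt_or_eq]
    grind
  have hC₂s : C₂.filter (· ≤ s) = C₂.filter (· < s) :=
    filter_congr fun y hy => by rw [le_iff_lt_or_eq, or_iff_left (ne_of_mem_of_not_mem hy hsC₂)]
  have hsub : C₂.filter (· < s) ⊆ C₂.filter (· ≤ h s) :=
    monotone_filter_right _ fun y _ hy => hy.le.trans (hge s)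
  have hcount : #(C₂.filter (· < s)) = #(C₂.filter (· ≤ h s)) :=
    (card_le_card hsub).antisymm (by omega)
  have hsame : C₂.filter (· < s) = C₂.filter (· ≤ h s) := eq_of_subset_of_card_le hsub hcount.ge
  refine ⟨s, hsC₁, by rw [hC₂s]; omega, fun y hy hsy => ?_⟩
  by_contra hle
  have : y ∈ C₂.filter (· < s) := hsame ▸ mem_filter.2 ⟨hy, not_lt.1 hle⟩
  exact (mem_filter.1 this).2.not_gt hsy

end TailSwap

/-- Exchange lemma for chains in the poset `P_h` (where `i ≺_h j ↔ h i < j`) of a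
Hessenberg function `h`: if `C₁, C₂` are disjoint chains with `|C₁| > |C₂| + 1`, then
there are disjoint chains `C₁', C₂'` with `C₁' ∪ C₂' = C₁ ∪ C₂`, `|C₁'| = |C₁| - 1` and
`|C₂'| = |C₂| + 1`. -/
theorem stmt_13 (n : ℕ) (h : Fin n → Fin n) (hmono : Monotone h) (hge : ∀ i, i ≤ h i)
    (C₁ C₂ : Finset (Fin n)) (hdisj : Disjoint C₁ C₂)
    (hc₁ : ∀ a ∈ C₁, ∀ b ∈ C₁, a ≠ b → h a < b ∨ h b < a)
    (hc₂ : ∀ a ∈ C₂, ∀ b ∈ C₂, a ≠ b → h a < b ∨ h b < a)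
    (hcard : C₂.card + 1 < C₁.card) :
    ∃ C₁' C₂' : Finset (Fin n), Disjoint C₁' C₂' ∧
      (∀ a ∈ C₁', ∀ b ∈ C₁', a ≠ b → h a < b ∨ h b < a) ∧
      (∀ a ∈ C₂', ∀ b ∈ C₂', a ≠ b → h a < b ∨ h b < a) ∧
      C₁' ∪ C₂' = C₁ ∪ C₂ ∧
      C₁'.card = C₁.card - 1 ∧ C₂'.card = C₂.card + 1 := by
  have hC₁ : IsChain (h · < ·) (C₁ : Set (Fin n)) := hc₁
  have hC₂ : IsChain (h · < ·) (C₂ : Set (Fin n)) := hc₂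
  obtain ⟨s, hsC₁, hcut, hs⟩ := exists_cut_of_card_lt hge hC₁ hdisj (by omega)
  have hC₁' := isChain_tailSwap hmono hC₂ hC₁ fun y hy hsy => hC₁.apply_lt_of_lt hge hsC₁ hy hsy
  have hC₂' := isChain_tailSwap hmono hC₁ hC₂ hs
  have hcard₁ := card_tailSwap_add hdisj.symm s
  have hcard₂ := card_tailSwap_add hdisj s
  refine ⟨tailSwap C₂ C₁ s, tailSwap C₁ C₂ s, (disjoint_tailSwap hdisj s).symm, hC₁', hC₂',
    by rw [union_comm, tailSwap_union_tailSwap], by omega, by omega⟩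
end

section
/- Let 1 ≤ m ≤ n, let ν be a partition of n − m, and let μ be a partition of n. Suppose the skew shape μ'/ν' is a horizontal strip of size m (i.e., ν'_j ≤ μ'_j for all j, Σ_j (μ'_j − ν'_j) = m, and μ'_{j+1} ≤ ν'_j for all j). Then there exists an (n−m) × m matrix Z over the field F such that the block matrix A = [[J_ν, Z],[0, 0]] (with J_ν in the top-left (n−m)×(n−m) block and zero blocks below) is conjugate under GL_n(F) to J_μ. Conversely, if such a Z exists then μ'/ν' is a horizontal strip of size m. -/
open scoped Classical

/-- The nilpotent block-diagonal Jordan matrix of type `μ` (block sizes `μ 0, μ 1, ...`). -/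
noncomputable def Jmat (F : Type*) [Field F] (n : ℕ) (μ : ℕ → ℕ) :
    Matrix (Fin n) (Fin n) F := fun a b =>
  if (b : ℕ) = (a : ℕ) + 1 ∧ ∀ t, (∑ i ∈ Finset.range t, μ i) ≠ (a : ℕ) + 1 then 1 else 0

/-- `conjP s μ j` is the `j`-th part (1-indexed) of the conjugate of the partition with
parts `μ 0, ..., μ (s-1)`. -/
def conjP (s : ℕ) (μ : ℕ → ℕ) (j : ℕ) : ℕ :=
  ((Finset.range s).filter fun i => j ≤ μ i).card

/-!
For a nilpotent `J`, the numbers `dim (ker J ⊓ range J ^ k)` are similarity invariants, and for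
the Jordan matrix `J_λ` the subspace `ker J_λ ⊓ range J_λ ^ k` is spanned by the first basis
vectors of the blocks of size `> k`, so its dimension is `λ'_(k+1)`. For `A = [[J_ν, Z], [0, 0]]`
the first summand `W` is `A`-stable with `A|_W = J_ν`, and `range A ⊆ W`. Hence
`ker J_ν ⊓ range J_ν ^ k` embeds in `ker A ⊓ range A ^ k`, while `ker A ⊓ range A ^ (k+1)` lies in
`ker J_ν ⊓ range J_ν ^ k`: these are the interlacing inequalities `ν'_j ≤ μ'_j` and
`μ'_(j+1) ≤ ν'_j`, and the strip has `|μ| - |ν| = m` boxes.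

Conversely, the interlacing inequalities say `ν_i ≤ μ_i ≤ ν_i + 1` for every row `i`. Order the
basis so that block `i` of `J_μ` is block `i` of `J_ν` followed, when `μ_i = ν_i + 1`, by one of
the `m` new basis vectors. In this order `J_μ` has the shape `[[J_ν, Z], [0, 0]]`, and a
permutation matrix conjugates one into the other.
-/

open Finset

section Blocks

variable (lam : ℕ → ℕ)

def blockStart (i : ℕ) : ℕ := ∑ j ∈ range i, lam j

variable {lam}

lemma blockStart_succ (i : ℕ) : blockStart lam (i + 1) = blockStart lam i + lam i :=
  sum_range_succ _ _

lemma blockStart_mono : Monotone (blockStart lam) := fun _ _ h =>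
  sum_le_sum_of_subset (range_subset_range.2 h)

lemma blockStart_add_lt {i o s : ℕ} (hi : i < s) (ho : o < lam i) :
    blockStart lam i + o < blockStart lam s :=
  calc blockStart lam i + o < blockStart lam (i + 1) := by rw [blockStart_succ]; omega
    _ ≤ blockStart lam s := blockStart_mono hi

lemma exists_eq_blockStart_add {s p : ℕ} (hp : p < blockStart lam s) :
    ∃ i < s, ∃ o < lam i, p = blockStart lam i + o := by
  induction s with
  | zero => simp [blockStart] at hp
  | succ s ih =>
    by_cases h : p < blockStart lam s
    · obtain ⟨i, hi, o, ho, rfl⟩ := ih h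
      exact ⟨i, by omega, o, ho, rfl⟩
    · rw [blockStart_succ] at hp
      exact ⟨s, by omega, p - blockStart lam s, by omega, by omega⟩

lemma blockStart_add_inj {i o i' o' : ℕ} (ho : o < lam i) (ho' : o' < lam i')
    (h : blockStart lam i + o = blockStart lam i' + o') : i = i' ∧ o = o' := by
  rcases lt_trichotomy i i' with hlt | rfl | hgt
  · have := blockStart_add_lt hlt ho
    omega
  · omega
  · have := blockStart_add_lt hgt ho'
    omega

variable (lam)

-- Junk value `0` for positions past the last block.
noncomputable def blockOf (p : ℕ) : ℕ :=
  if h : ∃ i, ∃ o < lam i, p = blockStart lam i + o then h.choose else 0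

noncomputable def blockOffset (p : ℕ) : ℕ := p - blockStart lam (blockOf lam p)

variable {lam}

lemma blockOf_blockStart_add {i o : ℕ} (ho : o < lam i) :
    blockOf lam (blockStart lam i + o) = i ∧ blockOffset lam (blockStart lam i + o) = o := by
  have h : ∃ i', ∃ o' < lam i', blockStart lam i + o = blockStart lam i' + o' := ⟨i, o, ho, rfl⟩
  obtain ⟨o', ho', he⟩ := h.choose_spec
  have hi : blockOf lam (blockStart lam i + o) = i := by
    rw [blockOf, dif_pos h]
    exact (blockStart_add_inj ho' ho he.symm).1
  refine ⟨hi, ?_⟩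
  rw [blockOffset, hi]
  omega

lemma blockOf_spec {s p : ℕ} (hp : p < blockStart lam s) :
    blockOf lam p < s ∧ blockOffset lam p < lam (blockOf lam p) ∧
      blockStart lam (blockOf lam p) + blockOffset lam p = p := by
  obtain ⟨i, hi, o, ho, rfl⟩ := exists_eq_blockStart_add hp
  obtain ⟨h1, h2⟩ := blockOf_blockStart_add ho
  rw [h1, h2]
  exact ⟨hi, ho, rfl⟩

lemma blockStart_eq_of_forall_ge_eq_zero {a b : ℕ} (ha : ∀ i, a ≤ i → lam i = 0)
    (hb : ∀ i, b ≤ i → lam i = 0) : blockStart lam a = blockStart lam b := by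
  have key : ∀ {c d}, c ≤ d → (∀ i, c ≤ i → lam i = 0) → blockStart lam c = blockStart lam d :=
    fun hcd h => sum_subset (range_subset_range.2 hcd) fun i hi hni => h i (by
      rw [mem_range] at hi hni; omega)
  rcases le_total a b with h | h
  · exact key h ha
  · exact (key h hb).symm

end Blocks

section Jordan

variable {F : Type*} [Field F] {lam : ℕ → ℕ} {s n : ℕ}

open Matrix LinearMap

lemma forall_blockStart_ne_iff {i o : ℕ} (ho : o < lam i) :
    (∀ t, blockStart lam t ≠ blockStart lam i + o + 1) ↔ o + 1 < lam i := by
  constructor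
  · intro h
    by_contra! hend
    exact h (i + 1) (by rw [blockStart_succ]; omega)
  · intro hlt t ht
    rcases le_or_gt t i with hti | hti
    · have : blockStart lam t ≤ blockStart lam i := blockStart_mono hti
      omega
    · have := blockStart_add_lt hti hlt
      omega

lemma blockOf_spec_fin (hn : blockStart lam s = n) (p : Fin n) :
    blockOf lam p < s ∧ blockOffset lam p < lam (blockOf lam p) ∧
      blockStart lam (blockOf lam p) + blockOffset lam p = p :=
  blockOf_spec (hn ▸ p.isLt)

lemma eq_iff_blockOf_eq_and_blockOffset_eq (hn : blockStart lam s = n) {p q : Fin n} :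
    p = q ↔ blockOf lam p = blockOf lam q ∧ blockOffset lam p = blockOffset lam q := by
  refine ⟨fun h => h ▸ ⟨rfl, rfl⟩, fun ⟨hb, ho⟩ => Fin.ext ?_⟩
  rw [← (blockOf_spec_fin hn p).2.2, ← (blockOf_spec_fin hn q).2.2, hb, ho]

lemma exists_blockOf_eq_blockOffset_eq (hn : blockStart lam s = n) (q : Fin n) {o : ℕ}
    (ho : o < lam (blockOf lam q)) :
    ∃ p : Fin n, blockOf lam p = blockOf lam q ∧ blockOffset lam p = o :=
  ⟨⟨blockStart lam (blockOf lam q) + o,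
      (blockStart_add_lt (blockOf_spec_fin hn q).1 ho).trans_eq hn⟩, blockOf_blockStart_add ho⟩

lemma jmat_apply (hn : blockStart lam s = n) (p q : Fin n) :
    Jmat F n lam p q = if blockOf lam q = blockOf lam p ∧
      blockOffset lam q = blockOffset lam p + 1 then 1 else 0 := by
  obtain ⟨-, hop, hp⟩ := blockOf_spec_fin hn p
  obtain ⟨-, hoq, hq⟩ := blockOf_spec_fin hn q
  refine if_congr ?_ rfl rfl
  generalize blockOf lam p = i, blockOffset lam p = o, blockOf lam q = j,
    blockOffset lam q = r at *
  change (_ ∧ ∀ t, blockStart lam t ≠ _) ↔ _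
  rw [← hp, ← hq, forall_blockStart_ne_iff hop]
  constructor
  · rintro ⟨hqp, hnot⟩
    exact blockStart_add_inj hoq hnot (by omega)
  · rintro ⟨rfl, rfl⟩
    exact ⟨by omega, hoq⟩

lemma jmat_pow_apply (hn : blockStart lam s = n) (k : ℕ) (p q : Fin n) :
    (Jmat F n lam ^ k) p q = if blockOf lam q = blockOf lam p ∧
      blockOffset lam q = blockOffset lam p + k then 1 else 0 := by
  induction k generalizing q with
  | zero =>
    rw [pow_zero, Matrix.one_apply]
    exact if_congr ((eq_iff_blockOf_eq_and_blockOffset_eq hn).trans (by omega)) rfl rfl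
  | succ k ih =>
    have hoq := (blockOf_spec_fin hn q).2.1
    rw [pow_succ, Matrix.mul_apply]
    simp_rw [jmat_apply hn, ih, ite_mul, one_mul, zero_mul, ← ite_and]
    obtain hq0 | hq0 := Nat.eq_zero_or_pos (blockOffset lam q)
    · rw [if_neg (by omega)]
      exact Fintype.sum_eq_zero _ fun c => if_neg (by omega)
    obtain ⟨c₀, hc₀⟩ := exists_blockOf_eq_blockOffset_eq hn q
      (by omega : blockOffset lam q - 1 < lam (blockOf lam q))
    rw [Fintype.sum_eq_single c₀ fun c hc => if_neg fun h =>
      hc ((eq_iff_blockOf_eq_and_blockOffset_eq hn).2 (by omega))]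
    exact if_congr (by omega) rfl rfl

lemma ker_toLin'_jmat (hn : blockStart lam s = n) :
    ker (toLin' (Jmat F n lam)) = Pi.spanSubset F {q : Fin n | blockOffset lam q = 0} := by
  ext v
  simp only [mem_ker, toLin'_apply, Pi.mem_spanSubset_iff, Set.mem_ofPred_eq]
  constructor
  · intro hv q hq
    obtain ⟨p, hpb, hpo⟩ := exists_blockOf_eq_blockOffset_eq hn q
      (by have := (blockOf_spec_fin hn q).2.1; omega : blockOffset lam q - 1 < _)
    have hvp := congrFun hv p
    rwa [mulVec, dotProduct, Fintype.sum_eq_single q, jmat_apply hn, if_pos (by omega),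
      one_mul] at hvp
    intro c hc
    rw [jmat_apply hn, if_neg, zero_mul]
    exact fun h => hc ((eq_iff_blockOf_eq_and_blockOffset_eq hn).2 (by omega))
  · intro hv
    funext p
    show ∑ c, Jmat F n lam p c * v c = 0
    refine Fintype.sum_eq_zero _ fun c => ?_
    rw [jmat_apply hn]
    split_ifs with h
    · rw [hv c (by omega), mul_zero]
    · rw [zero_mul]

lemma range_toLin'_jmat_pow (hn : blockStart lam s = n) (k : ℕ) :
    range (toLin' (Jmat F n lam) ^ k) =
      Pi.spanSubset F {q : Fin n | blockOffset lam q + k < lam (blockOf lam q)} := by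
  rw [← toLin'_pow]
  apply le_antisymm
  · rintro _ ⟨w, rfl⟩
    rw [Pi.mem_spanSubset_iff]
    intro q hq
    show ∑ c, (Jmat F n lam ^ k) q c * w c = 0
    refine Fintype.sum_eq_zero _ fun c => ?_
    rw [jmat_pow_apply hn, if_neg, zero_mul]
    rintro ⟨hb, ho⟩
    have := (blockOf_spec_fin hn c).2.1
    exact hq (by rw [Set.mem_ofPred_eq]; rw [hb] at this; omega)
  · rw [Pi.spanSubset.eq_1, Submodule.span_le]
    rintro _ ⟨q, hq, rfl⟩
    obtain ⟨c, hcb, hco⟩ := exists_blockOf_eq_blockOffset_eq hn q hq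
    refine ⟨Pi.single c 1, ?_⟩
    rw [toLin'_apply, mulVec_single_one, Pi.basisFun_apply]
    funext p
    rw [col_apply, jmat_pow_apply hn, Pi.single_apply]
    exact if_congr (by rw [eq_iff_blockOf_eq_and_blockOffset_eq hn]; omega) rfl rfl

lemma finrank_ker_inf_range_toLin'_jmat_pow (hn : blockStart lam s = n) (k : ℕ) :
    Module.finrank F ↥(ker (toLin' (Jmat F n lam)) ⊓ range (toLin' (Jmat F n lam) ^ k)) =
      conjP s lam (k + 1) := by
  have hinf : ker (toLin' (Jmat F n lam)) ⊓ range (toLin' (Jmat F n lam) ^ k) =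
      Pi.spanSubset F {q : Fin n | blockOffset lam q = 0 ∧ k < lam (blockOf lam q)} := by
    ext v
    simp only [ker_toLin'_jmat hn, range_toLin'_jmat_pow hn, Submodule.mem_inf,
      Pi.mem_spanSubset_iff, Set.mem_ofPred_eq]
    refine ⟨fun ⟨h₁, h₂⟩ q hq => ?_, fun h => ⟨fun q hq => h q ?_, fun q hq => h q ?_⟩⟩
    · by_cases h : blockOffset lam q = 0
      · exact h₂ q (by omega)
      · exact h₁ q h
    all_goals omega
  rw [hinf, Pi.dim_spanSubset, conjP, ← Set.ncard_coe_finset]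
  refine Set.ncard_congr (fun q _ => blockOf lam q) ?_ ?_ ?_
  · rintro q ⟨-, hq⟩
    simp only [coe_filter, mem_range, Set.mem_ofPred_eq]
    exact ⟨(blockOf_spec_fin hn q).1, hq⟩
  · rintro p q ⟨hp, -⟩ ⟨hq, -⟩ h
    exact (eq_iff_blockOf_eq_and_blockOffset_eq hn).2 ⟨h, by omega⟩
  · intro i hi
    simp only [coe_filter, mem_range, Set.mem_ofPred_eq] at hi
    have hp : blockStart lam i < n := (blockStart_add_lt (o := 0) hi.1 (by omega)).trans_eq hn
    obtain ⟨hb, ho⟩ : blockOf lam (blockStart lam i) = i ∧ blockOffset lam (blockStart lam i) = 0 :=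
      by simpa using blockOf_blockStart_add (lam := lam) (o := 0) (by omega)
    exact ⟨⟨blockStart lam i, hp⟩, ⟨ho, by simp only [hb]; omega⟩, hb⟩

end Jordan

section ConjugatePartition

variable {lam ν μ : ℕ → ℕ}

lemma lt_conjP_iff (hlam : Antitone lam) {s i j : ℕ} : i < conjP s lam j ↔ i < s ∧ j ≤ lam i := by
  constructor
  · intro hi
    by_contra! h
    have hsub : (range s).filter (fun t => j ≤ lam t) ⊆ range i := fun t ht => by
      rw [mem_filter, mem_range] at ht
      rw [mem_range]
      by_contra! hti
      have := hlam hti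
      have := h (by omega)
      omega
    have := card_le_card hsub
    rw [card_range] at this
    exact absurd hi (by rw [conjP]; omega)
  · rintro ⟨his, hj⟩
    calc i < #(range (i + 1)) := by rw [card_range]; omega
      _ ≤ conjP s lam j := card_le_card fun t ht => by
        rw [mem_range] at ht
        rw [mem_filter, mem_range]
        exact ⟨by omega, hj.trans (hlam (by omega))⟩

lemma sum_conjP (lam : ℕ → ℕ) (s N : ℕ) :
    ∑ j ∈ Icc 1 N, conjP s lam j = ∑ i ∈ range s, min (lam i) N := by
  induction N with
  | zero => simp
  | succ N ih =>
    rw [sum_Icc_succ_top (by omega), ih, conjP, card_filter, ← sum_add_distrib]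
    exact sum_congr rfl fun i _ => by split_ifs <;> omega

lemma le_of_forall_conjP_le (hν : Antitone ν) (hμ : Antitone μ) {sν sμ : ℕ}
    (hνzero : ∀ i, sν ≤ i → ν i = 0) (h : ∀ j, 1 ≤ j → conjP sν ν j ≤ conjP sμ μ j) (i : ℕ) :
    ν i ≤ μ i := by
  rcases Nat.eq_zero_or_pos (ν i) with h0 | hpos
  · omega
  have hi : i < sν := lt_of_not_ge fun h' => by rw [hνzero i h'] at hpos; omega
  exact ((lt_conjP_iff hμ).1 (((lt_conjP_iff hν).2 ⟨hi, le_rfl⟩).trans_le (h _ hpos))).2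

lemma le_add_one_of_forall_conjP_succ_le (hν : Antitone ν) (hμ : Antitone μ) {sν sμ : ℕ}
    (hμzero : ∀ i, sμ ≤ i → μ i = 0) (h : ∀ j, 1 ≤ j → conjP sμ μ (j + 1) ≤ conjP sν ν j)
    (i : ℕ) : μ i ≤ ν i + 1 := by
  by_contra! hi
  have his : i < sμ := lt_of_not_ge fun h' => by rw [hμzero i h'] at hi; omega
  have := (lt_conjP_iff hμ).2 ⟨his, (by omega : ν i + 1 + 1 ≤ μ i)⟩
  have := ((lt_conjP_iff hν).1 (this.trans_le (h _ (by omega)))).2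
  omega

lemma sum_conjP_eq_blockStart {s N : ℕ} (h : blockStart lam s ≤ N) :
    ∑ j ∈ Icc 1 N, conjP s lam j = blockStart lam s := by
  rw [sum_conjP]
  exact sum_congr rfl fun i hi =>
    min_eq_left ((single_le_sum (fun _ _ => Nat.zero_le _) hi).trans h)

end ConjugatePartition

section KerInfRangePow

open LinearMap Module

lemma map_ker_inf_range_pow_le {R V W : Type*} [Semiring R] [AddCommMonoid V] [Module R V]
    [AddCommMonoid W] [Module R W] {f : Module.End R V} {g : Module.End R W} {ι : W →ₗ[R] V}
    (h : f ∘ₗ ι = ι ∘ₗ g) (k : ℕ) :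
    (ker g ⊓ range (g ^ k)).map ι ≤ ker f ⊓ range (f ^ k) := by
  rintro _ ⟨w, ⟨hw, x, rfl⟩, rfl⟩
  have hk := LinearMap.congr_fun (Module.End.commute_pow_left_of_commute h k) x
  have h1 := LinearMap.congr_fun h ((g ^ k) x)
  simp only [coe_comp, Function.comp_apply] at hk h1
  refine ⟨?_, ι x, hk⟩
  simp only [SetLike.mem_coe, mem_ker] at hw ⊢
  rw [h1, hw, map_zero]

lemma ker_inf_range_pow_succ_le {R V W : Type*} [Semiring R] [AddCommMonoid V] [Module R V]
    [AddCommMonoid W] [Module R W] {f : Module.End R V} {g : Module.End R W} {ι : W →ₗ[R] V}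
    (h : f ∘ₗ ι = ι ∘ₗ g) (hι : Function.Injective ι) (hf : range f ≤ range ι) (k : ℕ) :
    ker f ⊓ range (f ^ (k + 1)) ≤ (ker g ⊓ range (g ^ k)).map ι := by
  rintro _ ⟨hv, x, rfl⟩
  obtain ⟨y, hy⟩ := hf ⟨x, rfl⟩
  have hk := LinearMap.congr_fun (Module.End.commute_pow_left_of_commute h k) y
  simp only [coe_comp, Function.comp_apply] at hk
  have hx : (f ^ (k + 1)) x = ι ((g ^ k) y) := by
    rw [pow_succ, Module.End.mul_apply, ← hy, hk]
  refine ⟨(g ^ k) y, ⟨?_, y, rfl⟩, hx.symm⟩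
  simp only [SetLike.mem_coe, mem_ker] at hv ⊢
  apply hι
  have h1 := LinearMap.congr_fun h ((g ^ k) y)
  simp only [coe_comp, Function.comp_apply] at h1
  rw [map_zero, ← h1, ← hx, hv]

variable {K V W : Type*} [Field K] [AddCommGroup V] [Module K V] [AddCommGroup W] [Module K W]

lemma map_ker_inf_range_pow_conj (Φ : V ≃ₗ[K] W) (f : Module.End K V) (k : ℕ) :
    (ker f ⊓ range (f ^ k)).map (Φ : V →ₗ[K] W) =
      ker (Φ.conjAlgEquiv K f) ⊓ range (Φ.conjAlgEquiv K f ^ k) := by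
  rw [← map_pow, Submodule.map_inf _ Φ.injective]
  simp only [LinearEquiv.conjAlgEquiv_apply, ker_comp, range_comp, LinearEquiv.range,
    Submodule.map_top, LinearEquiv.ker, Submodule.comap_bot,
    Submodule.comap_equiv_eq_map_symm, LinearEquiv.symm_symm]

lemma finrank_ker_inf_range_pow_conj (Φ : V ≃ₗ[K] W) (f : Module.End K V) (k : ℕ) :
    finrank K ↥(ker (Φ.conjAlgEquiv K f) ⊓ range (Φ.conjAlgEquiv K f ^ k)) =
      finrank K ↥(ker f ⊓ range (f ^ k)) := by
  rw [← map_ker_inf_range_pow_conj]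
  exact LinearEquiv.finrank_map_eq Φ _

end KerInfRangePow

section BlockMatrix

open Matrix LinearMap Module

variable {K ι κ : Type*} [Field K]

variable (K ι κ) in
def sumInlLinear : (ι → K) →ₗ[K] (ι ⊕ κ → K) :=
  (LinearEquiv.sumArrowLequivProdArrow ι κ K K).symm.toLinearMap ∘ₗ LinearMap.inl K _ _

lemma sumInlLinear_apply (v : ι → K) : sumInlLinear K ι κ v = Sum.elim v 0 := rfl

lemma sumInlLinear_injective : Function.Injective (sumInlLinear K ι κ) := fun _ _ h =>
  funext fun i => congrFun h (Sum.inl i)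

variable [Fintype ι] [Fintype κ] [DecidableEq ι] [DecidableEq κ]
  (A : Matrix ι ι K) (Z : Matrix ι κ K)

lemma toLin'_fromBlocks_comp_sumInlLinear :
    toLin' (fromBlocks A Z 0 0 : Matrix (ι ⊕ κ) (ι ⊕ κ) K) ∘ₗ sumInlLinear K ι κ =
      sumInlLinear K ι κ ∘ₗ toLin' A := by
  refine LinearMap.ext fun v => ?_
  simp [sumInlLinear_apply, fromBlocks_mulVec]

lemma range_toLin'_fromBlocks_le :
    range (toLin' (fromBlocks A Z 0 0 : Matrix (ι ⊕ κ) (ι ⊕ κ) K)) ≤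
      range (sumInlLinear K ι κ) := by
  rintro _ ⟨v, rfl⟩
  exact ⟨A *ᵥ (v ∘ Sum.inl) + Z *ᵥ (v ∘ Sum.inr), by
    simp [sumInlLinear_apply, fromBlocks_mulVec]⟩

lemma finrank_ker_inf_range_pow_le_fromBlocks (k : ℕ) :
    finrank K ↥(ker (toLin' A) ⊓ range (toLin' A ^ k)) ≤
      finrank K ↥(ker (toLin' (fromBlocks A Z 0 0 : Matrix (ι ⊕ κ) (ι ⊕ κ) K)) ⊓
        range (toLin' (fromBlocks A Z 0 0 : Matrix (ι ⊕ κ) (ι ⊕ κ) K) ^ k)) := by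
  rw [(Submodule.equivMapOfInjective _ sumInlLinear_injective
    (ker (toLin' A) ⊓ range (toLin' A ^ k))).finrank_eq]
  exact Submodule.finrank_mono
    (map_ker_inf_range_pow_le (toLin'_fromBlocks_comp_sumInlLinear A Z) k)

lemma finrank_ker_inf_range_pow_succ_fromBlocks_le (k : ℕ) :
    finrank K ↥(ker (toLin' (fromBlocks A Z 0 0 : Matrix (ι ⊕ κ) (ι ⊕ κ) K)) ⊓
        range (toLin' (fromBlocks A Z 0 0 : Matrix (ι ⊕ κ) (ι ⊕ κ) K) ^ (k + 1))) ≤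
      finrank K ↥(ker (toLin' A) ⊓ range (toLin' A ^ k)) := by
  rw [(Submodule.equivMapOfInjective _ sumInlLinear_injective
    (ker (toLin' A) ⊓ range (toLin' A ^ k))).finrank_eq]
  exact Submodule.finrank_mono (ker_inf_range_pow_succ_le
    (toLin'_fromBlocks_comp_sumInlLinear A Z) sumInlLinear_injective
    (range_toLin'_fromBlocks_le A Z) k)

end BlockMatrix

lemma Matrix.exists_toLin'_units_mul_reindex_mul_inv {K ι n : Type*} [Field K] [Fintype ι]
    [DecidableEq ι] [Fintype n] [DecidableEq n]
    (g : (Matrix n n K)ˣ) (e : ι ≃ n) (B : Matrix ι ι K) :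
    ∃ Φ : (ι → K) ≃ₗ[K] (n → K),
      toLin' ((g : Matrix n n K) * reindex e e B * (↑g⁻¹ : Matrix n n K)) =
        Φ.conjAlgEquiv K (toLin' B) := by
  refine ⟨(LinearEquiv.funCongrLeft K K e.symm).trans (toLinearEquiv' _ (Units.invertible g)), ?_⟩
  rw [toLin'_mul, toLin'_mul, toLin'_reindex, LinearEquiv.conjAlgEquiv_apply]
  rfl

lemma Matrix.exists_units_mul_mul_inv_eq_submatrix {R ι : Type*} [CommRing R] [Fintype ι]
    [DecidableEq ι] (A : Matrix ι ι R) (σ : Equiv.Perm ι) :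
    ∃ g : (Matrix ι ι R)ˣ, (g : Matrix ι ι R) * A * (↑g⁻¹ : Matrix ι ι R) = A.submatrix σ σ := by
  refine ⟨(Matrix.permMatrixHom (n := ι) (R := R)).toHomUnits σ⁻¹, ?_⟩
  rw [← map_inv, MonoidHom.coe_toHomUnits, MonoidHom.coe_toHomUnits, permMatrixHom_apply,
    permMatrixHom_apply, inv_inv, Equiv.Perm.permMatrix, Equiv.Perm.permMatrix,
    PEquiv.toMatrix_toPEquiv_mul, PEquiv.mul_toMatrix_toPEquiv]
  rfl

open Matrix in
theorem conjP_interlace_of_units_conj {F : Type*} [Field F] {ν μ : ℕ → ℕ} {sν sμ n k m : ℕ}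
    (hν : blockStart ν sν = k) (hμ : blockStart μ sμ = n) (e : Fin k ⊕ Fin m ≃ Fin n)
    (Z : Matrix (Fin k) (Fin m) F) (g : (Matrix (Fin n) (Fin n) F)ˣ)
    (hg : (g : Matrix (Fin n) (Fin n) F) * reindex e e (fromBlocks (Jmat F k ν) Z 0 0) *
      (↑g⁻¹ : Matrix (Fin n) (Fin n) F) = Jmat F n μ) :
    (∀ j, 1 ≤ j → conjP sν ν j ≤ conjP sμ μ j) ∧
      (∀ j, 1 ≤ j → conjP sμ μ (j + 1) ≤ conjP sν ν j) := by
  obtain ⟨Φ, hΦ⟩ := exists_toLin'_units_mul_reindex_mul_inv g e (fromBlocks (Jmat F k ν) Z 0 0)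
  rw [hg] at hΦ
  have hconj := fun j => (finrank_ker_inf_range_toLin'_jmat_pow hμ j).symm.trans
    (hΦ ▸ finrank_ker_inf_range_pow_conj Φ _ j)
  refine ⟨fun j hj => ?_, fun j hj => ?_⟩ <;> obtain ⟨j, rfl⟩ : ∃ i, j = i + 1 := ⟨j - 1, by omega⟩
  · rw [← finrank_ker_inf_range_toLin'_jmat_pow (F := F) hν, hconj]
    exact finrank_ker_inf_range_pow_le_fromBlocks _ Z j
  · rw [← finrank_ker_inf_range_toLin'_jmat_pow (F := F) hν, hconj]
    exact finrank_ker_inf_range_pow_succ_fromBlocks_le _ Z j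

section Strip

open Matrix

variable {F : Type*} [Field F] {ν μ : ℕ → ℕ} {s n m : ℕ}

def extraRank (ν μ : ℕ → ℕ) (i : ℕ) : ℕ := #((range i).filter fun t => ν t < μ t)

lemma extraRank_lt_extraRank {i j : ℕ} (hij : i < j) (hi : ν i < μ i) :
    extraRank ν μ i < extraRank ν μ j :=
  card_lt_card ((ssubset_iff_of_subset (monotone_filter_left _ (range_subset_range.2 hij.le))).2
    ⟨i, by simp [hij, hi], by simp⟩)

lemma blockStart_add_extraRank (hle : ∀ i, ν i ≤ μ i) (hle' : ∀ i, μ i ≤ ν i + 1) (s : ℕ) :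
    blockStart ν s + extraRank ν μ s = blockStart μ s := by
  rw [blockStart, blockStart, extraRank, card_filter, ← sum_add_distrib]
  exact sum_congr rfl fun i _ => by have := hle i; have := hle' i; split_ifs <;> omega

-- Position `o` of block `i` of `J_μ` goes to position `o` of block `i` of `J_ν` if `o < ν i`;
-- otherwise `o = ν i = μ i - 1`, and it goes to the new basis vector numbered by the rank of `i`
-- among the rows with `ν i < μ i`.
noncomputable def stripFun (hν : blockStart ν s = n - m) (hμ : blockStart μ s = n)
    (hm : extraRank ν μ s = m) (p : Fin n) : Fin (n - m) ⊕ Fin m :=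
  if h : blockOffset μ p < ν (blockOf μ p) then
    .inl ⟨blockStart ν (blockOf μ p) + blockOffset μ p,
      (blockStart_add_lt (blockOf_spec_fin hμ p).1 h).trans_eq hν⟩
  else
    .inr ⟨extraRank ν μ (blockOf μ p), (extraRank_lt_extraRank (blockOf_spec_fin hμ p).1
      (by have := (blockOf_spec_fin hμ p).2.1; omega)).trans_eq hm⟩

variable (hν : blockStart ν s = n - m) (hμ : blockStart μ s = n) (hm : extraRank ν μ s = m)

lemma blockOf_of_stripFun_eq_inl {p : Fin n} {a : Fin (n - m)}
    (hp : stripFun hν hμ hm p = .inl a) :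
    blockOf ν a = blockOf μ p ∧ blockOffset ν a = blockOffset μ p := by
  unfold stripFun at hp
  split_ifs at hp with h
  cases hp
  exact blockOf_blockStart_add h

lemma not_lt_of_stripFun_eq_inr {p : Fin n} {y : Fin m} (hp : stripFun hν hμ hm p = .inr y) :
    ¬ blockOffset μ p < ν (blockOf μ p) := by
  unfold stripFun at hp
  split_ifs at hp with h
  exact h

lemma stripFun_injective (hle' : ∀ i, μ i ≤ ν i + 1) : Function.Injective (stripFun hν hμ hm) := by
  intro p q h
  obtain ⟨hip, hop, -⟩ := blockOf_spec_fin hμ p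
  obtain ⟨hiq, hoq, -⟩ := blockOf_spec_fin hμ q
  rw [eq_iff_blockOf_eq_and_blockOffset_eq hμ]
  unfold stripFun at h
  split_ifs at h with hp hq hq
  · exact blockStart_add_inj hp hq (Fin.mk.inj_iff.1 (Sum.inl.inj h))
  · have hr := Fin.mk.inj_iff.1 (Sum.inr.inj h)
    have hb : blockOf μ p = blockOf μ q := by
      rcases lt_trichotomy (blockOf μ p) (blockOf μ q) with hlt | heq | hgt
      · exact absurd hr (extraRank_lt_extraRank hlt (by omega)).ne
      · exact heq
      · exact absurd hr (extraRank_lt_extraRank hgt (by omega)).ne'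
    have := hle' (blockOf μ p)
    rw [hb] at hp hop this
    exact ⟨hb, by omega⟩

lemma jmat_apply_of_stripFun_eq_inl {p q : Fin n} {a b : Fin (n - m)}
    (hp : stripFun hν hμ hm p = .inl a) (hq : stripFun hν hμ hm q = .inl b) :
    Jmat F n μ p q = Jmat F (n - m) ν a b := by
  obtain ⟨hpb, hpo⟩ := blockOf_of_stripFun_eq_inl hν hμ hm hp
  obtain ⟨hqb, hqo⟩ := blockOf_of_stripFun_eq_inl hν hμ hm hq
  rw [jmat_apply hμ, jmat_apply hν, hpb, hpo, hqb, hqo]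

lemma jmat_apply_of_stripFun_eq_inr (hle' : ∀ i, μ i ≤ ν i + 1) {p : Fin n} {y : Fin m}
    (hp : stripFun hν hμ hm p = .inr y) (q : Fin n) : Jmat F n μ p q = 0 := by
  have hp' := not_lt_of_stripFun_eq_inr hν hμ hm hp
  have hoq := (blockOf_spec_fin hμ q).2.1
  have := hle' (blockOf μ p)
  rw [jmat_apply hμ, if_neg]
  rintro ⟨hb, ho⟩
  rw [hb] at hoq
  omega

end Strip

open Matrix in
theorem exists_fromBlocks_submatrix_eq_jmat {F : Type*} [Field F] {ν μ : ℕ → ℕ} {s n m : ℕ}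
    (hle : ∀ i, ν i ≤ μ i) (hle' : ∀ i, μ i ≤ ν i + 1) (hν : blockStart ν s = n - m)
    (hμ : blockStart μ s = n) (hm : extraRank ν μ s = m) :
    ∃ (Z : Matrix (Fin (n - m)) (Fin m) F) (π : Fin n ≃ Fin (n - m) ⊕ Fin m),
      (fromBlocks (Jmat F (n - m) ν) Z 0 0).submatrix π π = Jmat F n μ := by
  have hcard : Fintype.card (Fin n) = Fintype.card (Fin (n - m) ⊕ Fin m) := by
    have := blockStart_add_extraRank hle hle' s
    simp only [Fintype.card_sum, Fintype.card_fin]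
    omega
  set π := Equiv.ofBijective _ ((Fintype.bijective_iff_injective_and_card _).2
    ⟨stripFun_injective hν hμ hm hle', hcard⟩)
  -- `Z` is read off from `J_μ` in the new order; only the other three blocks need checking.
  refine ⟨((Jmat F n μ).submatrix π.symm π.symm).toBlocks₁₂, π, ?_⟩
  ext p q
  rw [submatrix_apply]
  rcases hp : π p with a | y
  · rcases hq : π q with b | z
    · rw [fromBlocks_apply₁₁, jmat_apply_of_stripFun_eq_inl hν hμ hm hp hq]
    · rw [fromBlocks_apply₁₂, toBlocks₁₂, of_apply, submatrix_apply, ← hp, ← hq,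
        π.symm_apply_apply, π.symm_apply_apply]
  · rw [jmat_apply_of_stripFun_eq_inr hν hμ hm hle' hp]
    rcases π q with b | z <;> rfl

theorem stmt_16_general (F : Type*) [Field F] (n m : ℕ) (hmn : m ≤ n)
    (sν sμ : ℕ) (ν μ : ℕ → ℕ)
    (hνzero : ∀ i, sν ≤ i → ν i = 0)
    (hνanti : ∀ i j, i ≤ j → ν j ≤ ν i)
    (hνsum : ∑ i ∈ Finset.range sν, ν i = n - m)
    (hμzero : ∀ i, sμ ≤ i → μ i = 0)
    (hμanti : ∀ i j, i ≤ j → μ j ≤ μ i)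
    (hμsum : ∑ i ∈ Finset.range sμ, μ i = n) :
    ((∀ j, 1 ≤ j → conjP sν ν j ≤ conjP sμ μ j) ∧
      (∑ j ∈ Finset.Icc 1 n, (conjP sμ μ j - conjP sν ν j)) = m ∧
      (∀ j, 1 ≤ j → conjP sμ μ (j + 1) ≤ conjP sν ν j)) ↔
    ∃ Z : Matrix (Fin (n - m)) (Fin m) F, ∃ g : (Matrix (Fin n) (Fin n) F)ˣ,
      (g : Matrix (Fin n) (Fin n) F) *
          (Matrix.reindex (finSumFinEquiv.trans (finCongr (Nat.sub_add_cancel hmn)))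
            (finSumFinEquiv.trans (finCongr (Nat.sub_add_cancel hmn)))
            (Matrix.fromBlocks (Jmat F (n - m) ν) Z 0 0)) *
          (↑g⁻¹ : Matrix (Fin n) (Fin n) F) = Jmat F n μ := by
  set e := finSumFinEquiv.trans (finCongr (Nat.sub_add_cancel hmn))
  have hν : blockStart ν sν = n - m := hνsum
  have hμ : blockStart μ sμ = n := hμsum
  constructor
  · rintro ⟨h₁, -, h₃⟩
    have hle := le_of_forall_conjP_le hνanti hμanti hνzero h₁
    have hle' := le_add_one_of_forall_conjP_succ_le hνanti hμanti hμzero h₃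
    have hν' : blockStart ν sμ = n - m := (blockStart_eq_of_forall_ge_eq_zero
      (fun i hi => by have := hle i; rw [hμzero i hi] at this; omega) hνzero).trans hν
    have hm : extraRank ν μ sμ = m := by
      have := blockStart_add_extraRank hle hle' sμ
      omega
    obtain ⟨Z, π, hπ⟩ := exists_fromBlocks_submatrix_eq_jmat (F := F) hle hle' hν' hμ hm
    obtain ⟨g, hg⟩ := Matrix.exists_units_mul_mul_inv_eq_submatrix
      (Matrix.reindex e e (Matrix.fromBlocks (Jmat F (n - m) ν) Z 0 0)) (π.trans e)
    refine ⟨Z, g, hg.trans ?_⟩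
    rw [← hπ]
    ext p q
    simp
  · rintro ⟨Z, g, hg⟩
    obtain ⟨h₁, h₃⟩ := conjP_interlace_of_units_conj hν hμ e Z g hg
    refine ⟨h₁, ?_, h₃⟩
    rw [sum_tsub_distrib _ fun j hj => h₁ j (mem_Icc.1 hj).1, sum_conjP_eq_blockStart hμ.le,
      sum_conjP_eq_blockStart (by omega), hμ, hν]
    omega

/-- Division algorithm: for `1 ≤ m ≤ n`, a partition `ν` of `n - m` and a partition `μ`
of `n`, the skew shape `μ'/ν'` is a horizontal strip of size `m` if and only if there
exists an `(n-m) × m` matrix `Z` such that the block matrix `[[J_ν, Z], [0, 0]]` is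
`GL_n(F)`-conjugate to `J_μ`. -/
theorem stmt_16 (F : Type*) [Field F] (n m : ℕ) (hm : 1 ≤ m) (hmn : m ≤ n)
    (sν sμ : ℕ) (ν μ : ℕ → ℕ)
    (hνpos : ∀ i < sν, 0 < ν i) (hνzero : ∀ i, sν ≤ i → ν i = 0)
    (hνanti : ∀ i j, i ≤ j → ν j ≤ ν i)
    (hνsum : ∑ i ∈ Finset.range sν, ν i = n - m)
    (hμpos : ∀ i < sμ, 0 < μ i) (hμzero : ∀ i, sμ ≤ i → μ i = 0)
    (hμanti : ∀ i j, i ≤ j → μ j ≤ μ i)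
    (hμsum : ∑ i ∈ Finset.range sμ, μ i = n) :
    ((∀ j, 1 ≤ j → conjP sν ν j ≤ conjP sμ μ j) ∧
      (∑ j ∈ Finset.Icc 1 n, (conjP sμ μ j - conjP sν ν j)) = m ∧
      (∀ j, 1 ≤ j → conjP sμ μ (j + 1) ≤ conjP sν ν j)) ↔
    ∃ Z : Matrix (Fin (n - m)) (Fin m) F, ∃ g : (Matrix (Fin n) (Fin n) F)ˣ,
      (g : Matrix (Fin n) (Fin n) F) *
          (Matrix.reindex (finSumFinEquiv.trans (finCongr (Nat.sub_add_cancel hmn)))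
            (finSumFinEquiv.trans (finCongr (Nat.sub_add_cancel hmn)))
            (Matrix.fromBlocks (Jmat F (n - m) ν) Z 0 0)) *
          (↑g⁻¹ : Matrix (Fin n) (Fin n) F) = Jmat F n μ :=
  stmt_16_general F n m hmn sν sμ ν μ hνzero hνanti hνsum hμzero hμanti hμsum
end
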